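/- arXiv:2506.12663 — 5 statements merged into one kernel-verified Lean document; each statement's English description precedes it below -/
import Mathlib

section
/- Every Hermitian matrix z of size m can be transformed by the action b·z = b z b* of the group of invertible upper triangular complex matrices B_m(ℂ) into a signed partial involution, i.e., a symmetric matrix with entries in {-1,0,1} having at most one nonzero entry in each row and column, whose off-diagonal entries are all nonnegative. -/
open Matrix

/-- A signed partial involution with nonnegative off-diagonal entries:
a symmetric integer matrix with entries in `{-1,0,1}`, at most one nonzero
entry in each row and in each column, and nonnegative off-diagonal entries. -/
def IsSPIplus {m : ℕ} (τ : Matrix (Fin m) (Fin m) ℤ) : Prop :=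
  τ.IsSymm ∧
  (∀ i j, τ i j = -1 ∨ τ i j = 0 ∨ τ i j = 1) ∧
  (∀ i j k, τ i j ≠ 0 → τ i k ≠ 0 → j = k) ∧
  (∀ i j k, τ i k ≠ 0 → τ j k ≠ 0 → i = j) ∧
  (∀ i j, i ≠ j → 0 ≤ τ i j)

namespace SPI
variable {n : ℕ}


/-- Elementary transformation matrix: row `k` is `e_k + g k • e_J + h k • e_M`. -/
def elemB (J M : Fin n) (g h : Fin n → ℂ) : Matrix (Fin n) (Fin n) ℂ :=
  Matrix.of fun k l => (if k = l then 1 else 0) + g k * (if l = J then 1 else 0)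
    + h k * (if l = M then 1 else 0)

lemma elemB_apply (J M : Fin n) (g h : Fin n → ℂ) (k l : Fin n) :
    elemB J M g h k l = (if k = l then 1 else 0) + g k * (if l = J then 1 else 0)
      + h k * (if l = M then 1 else 0) := rfl

lemma elemB_mul_apply (J M : Fin n) (g h : Fin n → ℂ) (z : Matrix (Fin n) (Fin n) ℂ)
    (k v : Fin n) : (elemB J M g h * z) k v = z k v + g k * z J v + h k * z M v := by
  simp [elemB, mul_apply, add_mul, ite_mul, mul_assoc, Finset.sum_add_distrib]

lemma mul_elemB_conjT_apply (J M : Fin n) (g h : Fin n → ℂ) (y : Matrix (Fin n) (Fin n) ℂ)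
    (k l : Fin n) : (y * (elemB J M g h)ᴴ) k l
      = y k l + star (g l) * y k J + star (h l) * y k M := by
  simp [elemB, mul_apply, conjTranspose_apply, mul_add, mul_ite, apply_ite star,
    Finset.sum_add_distrib, mul_comm, eq_comm]

lemma conj_apply (J M : Fin n) (g h : Fin n → ℂ) (z : Matrix (Fin n) (Fin n) ℂ)
    (k l : Fin n) : (elemB J M g h * z * (elemB J M g h)ᴴ) k l
      = (z k l + g k * z J l + h k * z M l)
      + star (g l) * (z k J + g k * z J J + h k * z M J)
      + star (h l) * (z k M + g k * z J M + h k * z M M) := by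
  rw [mul_elemB_conjT_apply, elemB_mul_apply, elemB_mul_apply, elemB_mul_apply]




/-- `A` agrees with the identity outside the block `s × s`. -/
def IsId1 (s : Finset (Fin n)) (A : Matrix (Fin n) (Fin n) ℂ) : Prop :=
  ∀ i j, i ∉ s ∨ j ∉ s → A i j = if i = j then 1 else 0

lemma IsId1.mono {s t : Finset (Fin n)} (hst : s ⊆ t) {A : Matrix (Fin n) (Fin n) ℂ}
    (h : IsId1 s A) : IsId1 t A := fun i j hij =>
  h i j (hij.imp (fun h' c => h' (hst c)) (fun h' c => h' (hst c)))

lemma IsId1.mul {s : Finset (Fin n)} {A B : Matrix (Fin n) (Fin n) ℂ}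
    (hA : IsId1 s A) (hB : IsId1 s B) : IsId1 s (A * B) := by
  intro i j hij
  rcases hij with hi | hj
  · have hrow : ∀ k, A i k = if i = k then 1 else 0 := fun k => hA i k (Or.inl hi)
    simp only [mul_apply, hrow, ite_mul, one_mul, zero_mul]
    rw [Finset.sum_ite_eq (Finset.univ) i (fun k => B k j)]
    simp [hB i j (Or.inl hi)]
  · have hcol : ∀ k, B k j = if k = j then 1 else 0 := fun k => hB k j (Or.inr hj)
    simp only [mul_apply, hcol, mul_ite, mul_one, mul_zero]
    rw [Finset.sum_ite_eq' (Finset.univ) j (fun k => A i k)]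
    simp [hA i j (Or.inr hj)]

lemma IsId1.conj_std {s : Finset (Fin n)} {b : Matrix (Fin n) (Fin n) ℂ} (hb : IsId1 s b)
    {J M : Fin n} (hJ : J ∉ s) (hM : M ∉ s) (x : ℂ) :
    b * Matrix.single J M x * bᴴ = Matrix.single J M x := by
  ext k l
  have h1 : ∀ v, (b * Matrix.single J M x) k v = b k J * (if M = v then x else 0) := by
    intro v
    simp [mul_apply, Matrix.single, ite_and, mul_ite, Finset.sum_ite_eq']
  have h2 : (b * Matrix.single J M x * bᴴ) k l
      = b k J * x * star (b l M) := by
    simp only [mul_apply, conjTranspose_apply, h1]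
    rw [Finset.sum_eq_single M]
    · simp [Matrix.single, ite_and, mul_ite, Finset.sum_ite_eq']
    · intro v _ hv; simp [Ne.symm hv]
    · simp
  have hE : Matrix.single J M x k l = if J = k ∧ M = l then x else 0 := rfl
  rw [h2, hb k J (Or.inr hJ), hb l M (Or.inr hM), hE]
  rcases eq_or_ne J k with rfl | hk
  · rcases eq_or_ne M l with rfl | hl
    · simp
    · simp [hl, hl.symm]
  · simp [hk, hk.symm]

lemma mul_diag {A B : Matrix (Fin n) (Fin n) ℂ} (hA : A.BlockTriangular id)
    (hB : B.BlockTriangular id) (i : Fin n) : (A * B) i i = A i i * B i i := by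
  rw [mul_apply, Finset.sum_eq_single i]
  · intro b _ hb
    rcases lt_or_gt_of_ne hb with h | h
    · rw [hA (show (id : Fin n → Fin n) b < id i from h), zero_mul]
    · rw [hB (show (id : Fin n → Fin n) i < id b from h), mul_zero]
  · simp

lemma map_add_int (τ σ : Matrix (Fin n) (Fin n) ℤ) :
    (τ + σ).map (fun x : ℤ => (x : ℂ)) = τ.map (fun x : ℤ => (x : ℂ)) + σ.map (fun x : ℤ => (x : ℂ)) := by
  ext i j; simp

lemma map_std_int (J M : Fin n) (x : ℤ) :
    (Matrix.single J M x).map (fun x : ℤ => (x : ℂ)) = Matrix.single J M (x : ℂ) := by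
  ext i j
  simp only [map_apply, Matrix.single, of_apply]
  split_ifs <;> simp





lemma spi_zero : IsSPIplus (0 : Matrix (Fin n) (Fin n) ℤ) := by
  refine ⟨Matrix.isSymm_zero, ?_, ?_, ?_, ?_⟩ <;> simp

lemma spi_add_diag {τ : Matrix (Fin n) (Fin n) ℤ} (hτ : IsSPIplus τ) {M : Fin n} {ε : ℤ}
    (hε : ε = 1 ∨ ε = -1) (hr : ∀ k, τ M k = 0) (hc : ∀ k, τ k M = 0) :
    IsSPIplus (τ + Matrix.single M M ε) := by
  obtain ⟨h1, h2, h3, h4, h5⟩ := hτ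
  have key : ∀ k l, (τ + Matrix.single M M ε) k l = if M = k ∧ M = l then ε else τ k l := by
    intro k l
    have e : (τ + Matrix.single M M ε) k l = τ k l + (if M = k ∧ M = l then ε else 0) := rfl
    rw [e]
    split_ifs with h
    · obtain ⟨rfl, rfl⟩ := h; rw [hr]; ring
    · ring
  have hsym : ∀ i j, τ j i = τ i j := fun i j => congrFun (congrFun h1 i) j
  refine ⟨?_, ?_, ?_, ?_, ?_⟩
  · ext k l
    rw [transpose_apply, key, key]
    by_cases h : M = l ∧ M = k
    · rw [if_pos h, if_pos ⟨h.2, h.1⟩]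
    · rw [if_neg h, if_neg (fun c => h ⟨c.2, c.1⟩)]
      exact hsym k l
  · intro i j
    rw [key]
    split_ifs with h
    · rcases hε with rfl | rfl
      · right; right; rfl
      · left; rfl
    · exact h2 i j
  · intro i j k hj hk
    rw [key] at hj
    rw [key] at hk
    by_cases hiM : M = i
    · subst hiM
      have e : ∀ l, (if M = M ∧ M = l then ε else τ M l) ≠ 0 → M = l := by
        intro l hl
        by_cases h : M = l
        · exact h
        · rw [if_neg (fun c => h c.2), hr] at hl; exact absurd rfl hl
      rw [← e j hj, ← e k hk]
    · rw [if_neg (fun c => hiM c.1)] at hj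
      rw [if_neg (fun c => hiM c.1)] at hk
      exact h3 i j k hj hk
  · intro i j k hi hj
    rw [key] at hi
    rw [key] at hj
    by_cases hkM : M = k
    · subst hkM
      have e : ∀ l, (if M = l ∧ M = M then ε else τ l M) ≠ 0 → M = l := by
        intro l hl
        by_cases h : M = l
        · exact h
        · rw [if_neg (fun c => h c.1), hc] at hl; exact absurd rfl hl
      rw [← e i hi, ← e j hj]
    · rw [if_neg (fun c => hkM c.2)] at hi
      rw [if_neg (fun c => hkM c.2)] at hj
      exact h4 i j k hi hj
  · intro i j hij
    rw [key, if_neg (fun c => hij (c.1.symm.trans c.2))]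
    exact h5 i j hij

lemma std_transpose {α : Type*} [Zero α] (J M : Fin n) (x : α) :
    (Matrix.single J M x)ᵀ = Matrix.single M J x := by
  ext i j
  simp only [transpose_apply, Matrix.single, of_apply]
  exact if_congr and_comm rfl rfl

lemma std_conjT (J M : Fin n) (x : ℂ) :
    (Matrix.single J M x)ᴴ = Matrix.single M J (star x) := by
  ext i j
  simp only [conjTranspose_apply, Matrix.single, of_apply]
  rw [apply_ite (star : ℂ → ℂ), star_zero]
  exact if_congr and_comm rfl rfl

lemma spi_add_offdiag {τ : Matrix (Fin n) (Fin n) ℤ} (hτ : IsSPIplus τ) {J M : Fin n}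
    (hJM : J ≠ M)
    (hJr : ∀ k, τ J k = 0) (hJc : ∀ k, τ k J = 0)
    (hMr : ∀ k, τ M k = 0) (hMc : ∀ k, τ k M = 0) :
    IsSPIplus (τ + Matrix.single J M 1 + Matrix.single M J 1) := by
  obtain ⟨h1, h2, h3, h4, h5⟩ := hτ
  have key : ∀ k l, (τ + Matrix.single J M (1:ℤ) + Matrix.single M J (1:ℤ)) k l
      = if J = k ∧ M = l then 1 else if M = k ∧ J = l then 1 else τ k l := by
    intro k l
    have e : (τ + Matrix.single J M (1:ℤ) + Matrix.single M J (1:ℤ)) k l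
        = τ k l + (if J = k ∧ M = l then 1 else 0) + (if M = k ∧ J = l then 1 else 0) := rfl
    rw [e]
    split_ifs with p q q
    · exact absurd (p.1.trans q.1.symm) hJM
    · obtain ⟨rfl, rfl⟩ := p; rw [hJr]; ring
    · obtain ⟨rfl, rfl⟩ := q; rw [hMr]; ring
    · ring
  have hsym : ∀ i j, τ j i = τ i j := fun i j => congrFun (congrFun h1 i) j
  refine ⟨?_, ?_, ?_, ?_, ?_⟩
  · show (τ + Matrix.single J M 1 + Matrix.single M J 1)ᵀ = _
    rw [transpose_add, transpose_add, h1, std_transpose, std_transpose, add_right_comm]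
  · intro i j
    rw [key]
    split_ifs
    · right; right; rfl
    · right; right; rfl
    · exact h2 i j
  · intro i j k hj hk
    rw [key] at hj
    rw [key] at hk
    by_cases hiJ : J = i
    · subst hiJ
      have e : ∀ l, (if J = J ∧ M = l then (1:ℤ) else if M = J ∧ J = l then 1 else τ J l) ≠ 0
          → M = l := by
        intro l hl
        by_cases h : M = l
        · exact h
        · rw [if_neg (fun c => h c.2), if_neg (fun c => hJM c.1.symm), hJr] at hl
          exact absurd rfl hl
      rw [← e j hj, ← e k hk]
    · by_cases hiM : M = i
      · subst hiM
        have e : ∀ l, (if J = M ∧ M = l then (1:ℤ) else if M = M ∧ J = l then 1 else τ M l) ≠ 0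
            → J = l := by
          intro l hl
          by_cases h : J = l
          · exact h
          · rw [if_neg (fun c => hJM c.1), if_neg (fun c => h c.2), hMr] at hl
            exact absurd rfl hl
        rw [← e j hj, ← e k hk]
      · rw [if_neg (fun c => hiJ c.1), if_neg (fun c => hiM c.1)] at hj
        rw [if_neg (fun c => hiJ c.1), if_neg (fun c => hiM c.1)] at hk
        exact h3 i j k hj hk
  · intro i j k hi hj
    rw [key] at hi
    rw [key] at hj
    by_cases hkM : M = k
    · subst hkM
      have e : ∀ l, (if J = l ∧ M = M then (1:ℤ) else if M = l ∧ J = M then 1 else τ l M) ≠ 0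
          → J = l := by
        intro l hl
        by_cases h : J = l
        · exact h
        · rw [if_neg (fun c => h c.1), if_neg (fun c => hJM c.2), hMc] at hl
          exact absurd rfl hl
      rw [← e i hi, ← e j hj]
    · by_cases hkJ : J = k
      · subst hkJ
        have e : ∀ l, (if J = l ∧ M = J then (1:ℤ) else if M = l ∧ J = J then 1 else τ l J) ≠ 0
            → M = l := by
          intro l hl
          by_cases h : M = l
          · exact h
          · rw [if_neg (fun c => hJM c.2.symm), if_neg (fun c => h c.1), hJc] at hl
            exact absurd rfl hl
        rw [← e i hi, ← e j hj]
      · rw [if_neg (fun c => hkM c.2), if_neg (fun c => hkJ c.2)] at hi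
        rw [if_neg (fun c => hkM c.2), if_neg (fun c => hkJ c.2)] at hj
        exact h4 i j k hi hj
  · intro i j hij
    rw [key]
    split_ifs
    · omega
    · omega
    · exact h5 i j hij



theorem aux (s : Finset (Fin n)) : ∀ (z : Matrix (Fin n) (Fin n) ℂ), z.IsHermitian →
    (∀ i j, i ∉ s ∨ j ∉ s → z i j = 0) →
    ∃ b : Matrix (Fin n) (Fin n) ℂ, b.BlockTriangular id ∧ (∀ i, b i i ≠ 0) ∧ IsId1 s b ∧
      ∃ τ : Matrix (Fin n) (Fin n) ℤ, IsSPIplus τ ∧ (∀ i j, i ∉ s ∨ j ∉ s → τ i j = 0) ∧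
        b * z * bᴴ = τ.map (fun x : ℤ => (x : ℂ)) := by
  induction s using Finset.strongInduction with
  | _ s ih =>
    intro z hz hsupp
    rcases s.eq_empty_or_nonempty with rfl | hs
    · refine ⟨1, blockTriangular_one, fun i => by simp, fun i j _ => one_apply, 0,
        spi_zero, fun i j _ => rfl, ?_⟩
      have hz0 : z = 0 := by
        ext i j; exact hsupp i j (Or.inl (Finset.notMem_empty i))
      simp [hz0]
    · set M := s.max' hs with hMdef
      have hMs : M ∈ s := s.max'_mem hs
      have hout : ∀ k, k ∉ s → ∀ l, z k l = 0 := fun k hk l => hsupp k l (Or.inl hk)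
      have hout' : ∀ k l, l ∉ s → z k l = 0 := fun k l hl => hsupp k l (Or.inr hl)
      have hgt : ∀ k, M < k → k ∉ s := fun k hk hks => absurd (s.le_max' k hks) (not_le.2 hk)
      by_cases hrow : ∀ k, z M k = 0
      · -- Case A : row M is zero, just recurse
        have hsupp' : ∀ i j, i ∉ s.erase M ∨ j ∉ s.erase M → z i j = 0 := by
          intro i j hij
          rcases hij with hi | hj
          · by_cases h : i = M
            · subst h; exact hrow j
            · exact hout i (fun his => hi (Finset.mem_erase.2 ⟨h, his⟩)) j
          · by_cases h : j = M
            · subst h; rw [← hz.apply i M, hrow i, star_zero]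
            · exact hout' i j (fun hjs => hj (Finset.mem_erase.2 ⟨h, hjs⟩))
        obtain ⟨b, hb1, hb2, hb3, τ, ht1, ht2, ht3⟩ :=
          ih (s.erase M) (Finset.erase_ssubset hMs) z hz hsupp'
        exact ⟨b, hb1, hb2, hb3.mono (Finset.erase_subset M s), τ, ht1,
          fun i j hij => ht2 i j (hij.imp (fun h c => h (Finset.mem_of_mem_erase c))
            (fun h c => h (Finset.mem_of_mem_erase c))), ht3⟩
      · by_cases hMM : z M M = 0
        · -- Case C : off-diagonal pivot
          push_neg at hrow
          obtain ⟨k₀, hk₀⟩ := hrow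
          have hT : (Finset.univ.filter (fun k => z M k ≠ 0)).Nonempty :=
            ⟨k₀, Finset.mem_filter.2 ⟨Finset.mem_univ k₀, hk₀⟩⟩
          set J := (Finset.univ.filter (fun k => z M k ≠ 0)).max' hT with hJdef
          have haJ : z M J ≠ 0 := (Finset.mem_filter.1 (Finset.max'_mem _ hT)).2
          have hJmax : ∀ k, J < k → z M k = 0 := by
            intro k hk
            by_contra hne
            exact absurd (Finset.le_max' _ k (Finset.mem_filter.2 ⟨Finset.mem_univ k, hne⟩))
              (not_le.2 hk)
          have hJM : J ≠ M := fun hh => haJ (hh ▸ hMM)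
          have hJs : J ∈ s := by
            by_contra hJns
            exact haJ (hout' M J hJns)
          have hJltM : J < M := lt_of_le_of_ne (s.le_max' J hJs) hJM
          have hstar_a : star (z M J) ≠ 0 := star_ne_zero.2 haJ
          have hstar_a' : (starRingEnd ℂ) (z M J) ≠ 0 := hstar_a
          have hzJM : z J M = star (z M J) := (hz.apply J M).symm
          have hzJJ : star (z J J) = z J J := hz.apply J J
          have hcolM : ∀ k, J < k → z k M = 0 := by
            intro k hk
            by_cases hkM : k = M
            · subst hkM; exact hMM
            · rw [← hz.apply k M, hJmax k hk, star_zero]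
          set c : ℂ := -(z J J) / (2 * z M J) with hcdef
          have hstarc : star c = -(z J J) / (2 * star (z M J)) := by
            rw [hcdef, star_div₀, star_neg, hzJJ, star_mul']
            norm_num
          set g : Fin n → ℂ := fun k => if k = J ∨ k = M then 0 else -(z k M) / star (z M J)
            with hgdef
          set h : Fin n → ℂ := fun k => if k = M then 1 / z M J - 1 else if k = J then c else
            -((z k J + star c * z k M) + g k * (z J J + star c * star (z M J))) / z M J
            with hhdef
          have hgJ : g J = 0 := by simp [hgdef]
          have hgM : g M = 0 := by simp [hgdef]
          have hgk : ∀ k, k ≠ J → k ≠ M → g k = -(z k M) / star (z M J) := by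
            intro k h1 h2; simp [hgdef, h1, h2]
          have hhM : h M = 1 / z M J - 1 := by simp [hhdef]
          have hhJ : h J = c := by simp [hhdef, hJM]
          have hhk : ∀ k, k ≠ J → k ≠ M → h k
              = -((z k J + star c * z k M) + g k * (z J J + star c * star (z M J))) / z M J := by
            intro k h1 h2; simp [hhdef, h1, h2]
          set b₁ := elemB J M g h with hb₁def
          have entry : ∀ k l, (b₁ * z * b₁ᴴ) k l
              = (z k l + g k * z J l + h k * z M l)
              + star (g l) * (z k J + g k * z J J + h k * z M J)
              + star (h l) * (z k M + g k * z J M + h k * z M M) := by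
            intro k l; rw [hb₁def]; exact conj_apply J M g h z k l
          have hgout : ∀ k, k ∉ s → g k = 0 := by
            intro k hk
            have h1 : k ≠ J := fun hh => hk (hh ▸ hJs)
            have h2 : k ≠ M := fun hh => hk (hh ▸ hMs)
            rw [hgk k h1 h2, hout k hk M]; simp
          have hhout : ∀ k, k ∉ s → h k = 0 := by
            intro k hk
            have h1 : k ≠ J := fun hh => hk (hh ▸ hJs)
            have h2 : k ≠ M := fun hh => hk (hh ▸ hMs)
            rw [hhk k h1 h2, hout k hk J, hout k hk M, hgout k hk]; simp
          have fFM : ∀ k, k ≠ J → k ≠ M → z k M + g k * z J M + h k * z M M = 0 := by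
            intro k h1 h2
            rw [hgk k h1 h2, hzJM, hMM]
            field_simp [haJ, hstar_a']
            ring
          have fFJ : ∀ k, k ≠ J → k ≠ M → z k J + g k * z J J + h k * z M J = 0 := by
            intro k h1 h2
            rw [hhk k h1 h2, hgk k h1 h2]
            field_simp [haJ, hstar_a']
            ring
          have E1 : (b₁ * z * b₁ᴴ) M J = 1 := by
            rw [entry, hgJ, hgM, hhM, hhJ, hMM]
            field_simp [haJ, hstar_a']
            simp only [star_zero]; ring
          have E2 : (b₁ * z * b₁ᴴ) M M = 0 := by
            rw [entry, hgM, hhM, hMM]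
            simp
          have E3 : ∀ l, l ≠ J → l ≠ M → (b₁ * z * b₁ᴴ) M l = 0 := by
            intro l hl1 hl2
            rw [entry, hgM, hhM, hMM, hgk l hl1 hl2, star_div₀, star_neg, star_star,
              hz.apply M l]
            field_simp [haJ, hstar_a']
            ring
          have E4 : (b₁ * z * b₁ᴴ) J J = 0 := by
            rw [entry, hgJ, hhJ, hMM, hzJM, hstarc, hcdef]
            field_simp [haJ, hstar_a']
            simp only [star_zero]
            ring
          have E5 : ∀ k, k ≠ J → k ≠ M → (b₁ * z * b₁ᴴ) k J = 0 := by
            intro k h1 h2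
            rw [entry, hgJ, hhJ, fFJ k h1 h2, fFM k h1 h2]
            simp
          have E6 : ∀ k, k ≠ J → k ≠ M → (b₁ * z * b₁ᴴ) k M = 0 := by
            intro k h1 h2
            rw [entry, hgM, hhM, fFM k h1 h2, fFJ k h1 h2]
            simp
          have hz₁ : (b₁ * z * b₁ᴴ).IsHermitian := isHermitian_mul_mul_conjTranspose b₁ hz
          set Pc := Matrix.single J M ((1 : ℤ) : ℂ) + Matrix.single M J ((1 : ℤ) : ℂ)
            with hPcdef
          have hPcapp : ∀ k l, Pc k l = (if J = k ∧ M = l then ((1 : ℤ) : ℂ) else 0)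
              + (if M = k ∧ J = l then ((1 : ℤ) : ℂ) else 0) := fun k l => rfl
          have hPcH : Pc.IsHermitian := by
            show Pcᴴ = Pc
            rw [hPcdef, conjTranspose_add, std_conjT, std_conjT]
            simp only [star_intCast]
            exact add_comm _ _
          set w := b₁ * z * b₁ᴴ - Pc with hwdef
          have hw : w.IsHermitian := hz₁.sub hPcH
          have hwapp : ∀ k l, w k l = (b₁ * z * b₁ᴴ) k l - Pc k l := fun k l => rfl
          have hwMrow : ∀ l, w M l = 0 := by
            intro l
            rw [hwapp, hPcapp]
            by_cases hl1 : l = J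
            · subst hl1
              rw [E1, if_neg (fun cc => hJM cc.1), if_pos ⟨rfl, rfl⟩]
              norm_num
            · by_cases hl2 : l = M
              · subst hl2
                rw [E2, if_neg (fun cc => hJM cc.1), if_neg (fun cc => hJM cc.2)]
                norm_num
              · rw [E3 l hl1 hl2, if_neg (fun cc => hJM cc.1),
                  if_neg (fun cc => hl1 cc.2.symm)]
                norm_num
          have hwJrow : ∀ l, w J l = 0 := by
            intro l
            rw [hwapp, hPcapp]
            by_cases hl2 : l = M
            · subst hl2
              rw [← hz₁.apply J M, E1, if_pos ⟨rfl, rfl⟩, if_neg (fun cc => hJM cc.1.symm)]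
              norm_num
            · by_cases hl1 : l = J
              · subst hl1
                rw [E4, if_neg (fun cc => hJM cc.2.symm), if_neg (fun cc => hJM cc.1.symm)]
                norm_num
              · rw [← hz₁.apply J l, E5 l hl1 hl2, if_neg (fun cc => hl2 cc.2.symm),
                  if_neg (fun cc => hJM cc.1.symm)]
                norm_num
          have hwMcol : ∀ k, w k M = 0 := fun k => by
            rw [← hw.apply k M, hwMrow k, star_zero]
          have hwJcol : ∀ k, w k J = 0 := fun k => by
            rw [← hw.apply k J, hwJrow k, star_zero]
          have hwout : ∀ i, i ∉ s → ∀ j, w i j = 0 := by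
            intro i hi j
            have h1 : i ≠ J := fun hh => hi (hh ▸ hJs)
            have h2 : i ≠ M := fun hh => hi (hh ▸ hMs)
            rw [hwapp, hPcapp, entry, hgout i hi, hhout i hi, hout i hi j, hout i hi J,
              hout i hi M, if_neg (fun cc => h1 cc.1.symm), if_neg (fun cc => h2 cc.1.symm)]
            simp
          have hwout' : ∀ i j, j ∉ s → w i j = 0 := by
            intro i j hj
            rw [← hw.apply i j, hwout j hj i, star_zero]
          have hwsupp : ∀ i j, i ∉ (s.erase M).erase J ∨ j ∉ (s.erase M).erase J
              → w i j = 0 := by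
            intro i j hij
            rcases hij with hi | hj
            · by_cases hh1 : i = J
              · subst hh1; exact hwJrow j
              · by_cases hh2 : i = M
                · subst hh2; exact hwMrow j
                · refine hwout i (fun his => hi ?_) j
                  exact Finset.mem_erase.2 ⟨hh1, Finset.mem_erase.2 ⟨hh2, his⟩⟩
            · by_cases hh1 : j = J
              · subst hh1; exact hwJcol i
              · by_cases hh2 : j = M
                · subst hh2; exact hwMcol i
                · refine hwout' i j (fun hjs => hj ?_)
                  exact Finset.mem_erase.2 ⟨hh1, Finset.mem_erase.2 ⟨hh2, hjs⟩⟩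
          have hss' : (s.erase M).erase J ⊂ s :=
            ssubset_of_subset_of_ssubset (Finset.erase_subset _ _) (Finset.erase_ssubset hMs)
          obtain ⟨b', hb'1, hb'2, hb'3, τ', ht'1, ht'2, ht'3⟩ :=
            ih ((s.erase M).erase J) hss' w hw hwsupp
          have hJns' : J ∉ (s.erase M).erase J := Finset.notMem_erase J _
          have hMns' : M ∉ (s.erase M).erase J :=
            fun hh => Finset.notMem_erase M s (Finset.mem_of_mem_erase hh)
          have hsub' : (s.erase M).erase J ⊆ s :=
            (Finset.erase_subset _ _).trans (Finset.erase_subset _ _)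
          -- properties of b₁
          have htri₁ : b₁.BlockTriangular id := by
            intro k l hlt
            have hlk : l ≠ k := ne_of_lt hlt
            rw [hb₁def, elemB_apply, if_neg (fun cc => hlk cc.symm)]
            by_cases hlJ : l = J
            · subst hlJ
              have hg0 : g k = 0 := by
                by_cases hkM : k = M
                · subst hkM; exact hgM
                · rw [hgk k (ne_of_gt (show J < k from hlt)) hkM, hcolM k hlt]
                  simp
              simp [hg0, hJM]
            · by_cases hlM : l = M
              · subst hlM
                have hks : k ∉ s := hgt k hlt
                simp [hgout k hks, hhout k hks]
              · simp [hlJ, hlM]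
          have hdiag₁ : ∀ i, b₁ i i ≠ 0 := by
            intro i
            rw [hb₁def, elemB_apply, if_pos rfl]
            by_cases hiM : i = M
            · subst hiM
              have : (1 : ℂ) + g M * (if M = J then 1 else 0) + h M * (if M = M then 1 else 0)
                  = 1 / z M J := by
                rw [hgM, hhM, if_neg (fun cc => hJM cc.symm), if_pos rfl]; ring
              rw [this]
              exact one_div_ne_zero haJ
            · by_cases hiJ : i = J
              · subst hiJ
                have : (1 : ℂ) + g J * (if J = J then 1 else 0) + h J * (if J = M then 1 else 0)
                    = 1 := by rw [hgJ, if_neg hJM]; ring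
                rw [this]
                exact one_ne_zero
              · have : (1 : ℂ) + g i * (if i = J then 1 else 0) + h i * (if i = M then 1 else 0)
                    = 1 := by rw [if_neg hiJ, if_neg hiM]; ring
                rw [this]
                exact one_ne_zero
          have hId₁ : IsId1 s b₁ := by
            intro i j hij
            rcases hij with hi | hj
            · rw [hb₁def, elemB_apply, hgout i hi, hhout i hi]
              simp
            · have h1 : j ≠ J := fun hh => hj (hh ▸ hJs)
              have h2 : j ≠ M := fun hh => hj (hh ▸ hMs)
              rw [hb₁def, elemB_apply, if_neg h1, if_neg h2]
              simp
          refine ⟨b' * b₁, hb'1.mul htri₁, ?_, (hb'3.mono hsub').mul hId₁,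
            τ' + Matrix.single J M 1 + Matrix.single M J 1, ?_, ?_, ?_⟩
          · intro i
            rw [mul_diag hb'1 htri₁ i]
            exact mul_ne_zero (hb'2 i) (hdiag₁ i)
          · exact spi_add_offdiag ht'1 hJM
              (fun k => ht'2 J k (Or.inl hJns')) (fun k => ht'2 k J (Or.inr hJns'))
              (fun k => ht'2 M k (Or.inl hMns')) (fun k => ht'2 k M (Or.inr hMns'))
          · intro i j hij
            have hij' : i ∉ (s.erase M).erase J ∨ j ∉ (s.erase M).erase J :=
              hij.imp (fun hh cc => hh (hsub' cc)) (fun hh cc => hh (hsub' cc))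
            have hrfl : (τ' + Matrix.single J M (1:ℤ) + Matrix.single M J (1:ℤ)) i j
                = τ' i j + (if J = i ∧ M = j then (1:ℤ) else 0)
                + (if M = i ∧ J = j then (1:ℤ) else 0) := rfl
            rw [hrfl, ht'2 i j hij']
            rcases hij with hi | hj
            · rw [if_neg (show ¬(J = i ∧ M = j) from fun cc => hi (cc.1 ▸ hJs)),
                if_neg (show ¬(M = i ∧ J = j) from fun cc => hi (cc.1 ▸ hMs))]
              ring
            · rw [if_neg (show ¬(J = i ∧ M = j) from fun cc => hj (cc.2 ▸ hMs)),
                if_neg (show ¬(M = i ∧ J = j) from fun cc => hj (cc.2 ▸ hJs))]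
              ring
          · have hsplit : b₁ * z * b₁ᴴ = w + Pc := by rw [hwdef, sub_add_cancel]
            have e1 : b' * b₁ * z * (b' * b₁)ᴴ = b' * (b₁ * z * b₁ᴴ) * b'ᴴ := by
              rw [conjTranspose_mul]; simp only [Matrix.mul_assoc]
            rw [e1, hsplit, Matrix.mul_add, Matrix.add_mul, ht'3, hPcdef, Matrix.mul_add,
              Matrix.add_mul, hb'3.conj_std hJns' hMns', hb'3.conj_std hMns' hJns',
              map_add_int, map_add_int, map_std_int, map_std_int, add_assoc]
        · -- Case B : diagonal pivot at (M, M)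
          set t : ℝ := (z M M).re with htdef
          have htc : z M M = (t : ℂ) := by
            have h1 : (starRingEnd ℂ) (z M M) = z M M := hz.apply M M
            exact (Complex.conj_eq_iff_re.1 h1).symm
          have ht0 : t ≠ 0 := fun h => hMM (by rw [htc, h]; simp)
          set c : ℝ := (Real.sqrt |t|)⁻¹ with hcdef
          have hc0 : c ≠ 0 := by
            have : 0 < Real.sqrt |t| := Real.sqrt_pos.2 (abs_pos.2 ht0)
            exact (inv_pos.2 this).ne'
          set ε : ℤ := if 0 < t then 1 else -1 with hεdef
          have hε : ε = 1 ∨ ε = -1 := by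
            rw [hεdef]; split_ifs; exacts [Or.inl rfl, Or.inr rfl]
          have hcsq : (c : ℂ) ^ 2 * (t : ℂ) = (ε : ℂ) := by
            have hre : c ^ 2 * t = if 0 < t then (1 : ℝ) else -1 := by
              rw [hcdef, inv_pow, Real.sq_sqrt (abs_nonneg t)]
              rcases lt_or_gt_of_ne ht0 with hlt | hgt'
              · rw [if_neg (not_lt.2 hlt.le), abs_of_neg hlt]; field_simp
              · rw [if_pos hgt', abs_of_pos hgt']; field_simp
            calc (c : ℂ) ^ 2 * (t : ℂ) = ((c ^ 2 * t : ℝ) : ℂ) := by push_cast; ring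
            _ = (ε : ℂ) := by rw [hre, hεdef]; split_ifs <;> norm_num
          set h : Fin n → ℂ := fun k => if k = M then (c : ℂ) - 1 else -(z k M) / (z M M)
            with hhdef
          have hhM : h M = (c : ℂ) - 1 := by simp [hhdef]
          have hhk : ∀ k, k ≠ M → h k = -(z k M) / (z M M) := by
            intro k hk; simp [hhdef, hk]
          set b₁ := elemB M M 0 h with hb₁def
          have entry : ∀ k l, (b₁ * z * b₁ᴴ) k l
              = z k l + h k * z M l + star (h l) * (z k M + h k * z M M) := by
            intro k l
            rw [hb₁def, conj_apply]
            simp only [Pi.zero_apply, zero_mul, mul_zero, star_zero, add_zero, zero_add]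
          have hclear : ∀ k, k ≠ M → z k M + h k * z M M = 0 := by
            intro k hk
            rw [hhk k hk]
            field_simp
            ring
          -- key entries
          have e1 : ∀ k, k ≠ M → (b₁ * z * b₁ᴴ) k M = 0 := by
            intro k hk
            rw [entry, hclear k hk]
            simp
          have e2 : ∀ l, l ≠ M → (b₁ * z * b₁ᴴ) M l = 0 := by
            intro l hl
            have hsl : star (h l) = -(z M l) / (z M M) := by
              rw [hhk l hl, star_div₀, star_neg, hz.apply M l, hz.apply M M]
            rw [entry, hsl, hhM]
            field_simp
            ring
          have e3 : (b₁ * z * b₁ᴴ) M M = ((ε : ℤ) : ℂ) := by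
            have hstar : star (h M) = (c : ℂ) - 1 := by
              rw [hhM]; simp [Complex.star_def, Complex.conj_ofReal]
            rw [entry, hstar, hhM, htc]
            push_cast
            linear_combination hcsq
          set Pc := Matrix.single M M ((ε : ℤ) : ℂ) with hPcdef
          have hPcapp : ∀ k l, Pc k l = if M = k ∧ M = l then ((ε : ℤ) : ℂ) else 0 :=
            fun k l => rfl
          have hPcH : Pc.IsHermitian := by
            show Pcᴴ = Pc
            rw [hPcdef, std_conjT]
            norm_cast
          set w := b₁ * z * b₁ᴴ - Pc with hwdef
          have hw : w.IsHermitian := (isHermitian_mul_mul_conjTranspose b₁ hz).sub hPcH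
          have hwapp : ∀ k l, w k l = (b₁ * z * b₁ᴴ) k l - Pc k l := fun k l => rfl
          have hwMrow : ∀ l, w M l = 0 := by
            intro l
            rw [hwapp, hPcapp]
            by_cases hl : l = M
            · subst hl; rw [e3, if_pos ⟨rfl, rfl⟩, sub_self]
            · rw [e2 l hl, if_neg (fun cc => hl cc.2.symm), sub_zero]
          have hwMcol : ∀ k, w k M = 0 := by
            intro k
            rw [← hw.apply k M, hwMrow k, star_zero]
          have hwout : ∀ i, i ∉ s → ∀ j, w i j = 0 := by
            intro i hi j
            have hiM : i ≠ M := fun hh => hi (hh ▸ hMs)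
            have hhi : h i = 0 := by rw [hhk i hiM, hout i hi M]; simp
            rw [hwapp, hPcapp, entry, hhi, hout i hi j, hout i hi M,
              if_neg (fun cc => hiM cc.1.symm)]
            simp
          have hwout' : ∀ i j, j ∉ s → w i j = 0 := by
            intro i j hj
            rw [← hw.apply i j, hwout j hj i, star_zero]
          have hwsupp : ∀ i j, i ∉ s.erase M ∨ j ∉ s.erase M → w i j = 0 := by
            intro i j hij
            rcases hij with hi | hj
            · by_cases hhh : i = M
              · subst hhh; exact hwMrow j
              · exact hwout i (fun his => hi (Finset.mem_erase.2 ⟨hhh, his⟩)) j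
            · by_cases hhh : j = M
              · subst hhh; exact hwMcol i
              · exact hwout' i j (fun hjs => hj (Finset.mem_erase.2 ⟨hhh, hjs⟩))
          obtain ⟨b', hb'1, hb'2, hb'3, τ', ht'1, ht'2, ht'3⟩ :=
            ih (s.erase M) (Finset.erase_ssubset hMs) w hw hwsupp
          -- properties of b₁
          have htri₁ : b₁.BlockTriangular id := by
            intro k l hlt
            have hlk : l ≠ k := ne_of_lt hlt
            rw [hb₁def, elemB_apply, if_neg (fun cc => hlk cc.symm)]
            by_cases hlM : l = M
            · subst hlM
              have hkM : k ≠ M := ne_of_gt (show M < k from hlt)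
              have : h k = 0 := by
                rw [hhk k hkM, hout k (hgt k hlt) M]; simp
              simp [this]
            · simp [hlM]
          have hdiag₁ : ∀ i, b₁ i i ≠ 0 := by
            intro i
            rw [hb₁def, elemB_apply, if_pos rfl]
            by_cases hiM : i = M
            · subst hiM
              rw [if_pos rfl, hhM]
              simp only [Pi.zero_apply, zero_mul, add_zero]
              intro hcon
              apply hc0
              have : (c : ℂ) = 0 := by linear_combination hcon
              exact_mod_cast this
            · rw [if_neg hiM]
              simp
          have hId₁ : IsId1 s b₁ := by
            intro i j hij
            rcases hij with hi | hj
            · have hiM : i ≠ M := fun hh => hi (hh ▸ hMs)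
              have hhi : h i = 0 := by rw [hhk i hiM, hout i hi M]; simp
              rw [hb₁def, elemB_apply, hhi]
              simp
            · have hjM : j ≠ M := fun hh => hj (hh ▸ hMs)
              rw [hb₁def, elemB_apply, if_neg hjM]
              simp
          refine ⟨b' * b₁, hb'1.mul htri₁, ?_, (hb'3.mono (Finset.erase_subset M s)).mul hId₁,
            τ' + Matrix.single M M ε, ?_, ?_, ?_⟩
          · intro i
            rw [mul_diag hb'1 htri₁ i]
            exact mul_ne_zero (hb'2 i) (hdiag₁ i)
          · exact spi_add_diag ht'1 hε
              (fun k => ht'2 M k (Or.inl (Finset.notMem_erase M s)))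
              (fun k => ht'2 k M (Or.inr (Finset.notMem_erase M s)))
          · intro i j hij
            have hij' : i ∉ s.erase M ∨ j ∉ s.erase M :=
              hij.imp (fun hh cc => hh (Finset.mem_of_mem_erase cc))
                (fun hh cc => hh (Finset.mem_of_mem_erase cc))
            have : (τ' + Matrix.single M M ε) i j
                = τ' i j + (if M = i ∧ M = j then ε else 0) := rfl
            rw [this, ht'2 i j hij']
            rcases hij with hi | hj
            · rw [if_neg (show ¬(M = i ∧ M = j) from fun cc => hi (cc.1 ▸ hMs))]; ring
            · rw [if_neg (show ¬(M = i ∧ M = j) from fun cc => hj (cc.2 ▸ hMs))]; ring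
          · have hsplit : b₁ * z * b₁ᴴ = w + Pc := by rw [hwdef, sub_add_cancel]
            calc (b' * b₁) * z * (b' * b₁)ᴴ
                = b' * (b₁ * z * b₁ᴴ) * b'ᴴ := by
                  rw [conjTranspose_mul]; simp only [Matrix.mul_assoc]
              _ = b' * w * b'ᴴ + b' * Pc * b'ᴴ := by
                  rw [hsplit, Matrix.mul_add, Matrix.add_mul]
              _ = τ'.map (fun x : ℤ => (x : ℂ)) + Pc := by
                  rw [ht'3, hPcdef,
                    hb'3.conj_std (Finset.notMem_erase M s) (Finset.notMem_erase M s)]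
              _ = (τ' + Matrix.single M M ε).map (fun x : ℤ => (x : ℂ)) := by
                  rw [map_add_int, map_std_int]

end SPI

/-- Every Hermitian matrix can be transformed by the action `b · z = b z b*` of the
group of invertible upper triangular complex matrices into a signed partial
involution with nonnegative off-diagonal entries. -/
theorem stmt0 {m : ℕ} (z : Matrix (Fin m) (Fin m) ℂ) (hz : z.IsHermitian) :
    ∃ b : Matrix (Fin m) (Fin m) ℂ, IsUnit b ∧ b.BlockTriangular id ∧
      ∃ τ : Matrix (Fin m) (Fin m) ℤ, IsSPIplus τ ∧
        b * z * bᴴ = τ.map (fun x : ℤ => (x : ℂ)) := by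
  obtain ⟨b, hb1, hb2, _, τ, ht1, _, ht3⟩ := SPI.aux (Finset.univ) z hz
    (fun i j hij => by
      rcases hij with hi | hj
      · exact absurd (Finset.mem_univ i) hi
      · exact absurd (Finset.mem_univ j) hj)
  refine ⟨b, ?_, hb1, τ, ht1, ht3⟩
  apply (Matrix.isUnit_iff_isUnit_det b).2
  rw [det_of_upperTriangular hb1]
  exact isUnit_iff_ne_zero.2 (Finset.prod_ne_zero_iff.2 (fun i _ => hb2 i))
end

section
/- The quantities rank(z_{[p]ᶜ,[q]ᶜ}) for 0 ≤ p ≤ q < m and sign(z_{[p]ᶜ}) for 0 ≤ p < m are invariant under the action b·z = b z b* of the upper triangular group B_m(ℂ) on Hermitian m×m matrices. -/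
open Matrix

/-- The inclusion of `{p+1, ..., m}` (as `Fin (m - p)`) into `Fin m`. -/
def tailEmb (m p : ℕ) (hp : p ≤ m) : Fin (m - p) → Fin m :=
  fun i => ⟨p + i.1, by have := i.isLt; omega⟩

lemma sum_tail {M : Type*} [AddCommMonoid M] {m p : ℕ} (hp : p ≤ m) (f : Fin m → M)
    (h : ∀ j : Fin m, j.1 < p → f j = 0) :
    ∑ j, f j = ∑ i : Fin (m - p), f (tailEmb m p hp i) := by
  have hm : p + (m - p) = m := by omega
  let e := (finSumFinEquiv (m := p) (n := m - p)).trans (finCongr hm)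
  rw [← Fintype.sum_equiv e (fun x => f (e x)) f (fun x => rfl), Fintype.sum_sum_type]
  have h1 : ∀ a : Fin p, f (e (Sum.inl a)) = 0 := by
    intro a; apply h
    simp [e, finCongr, finSumFinEquiv_apply_left]
  simp only [h1, Finset.sum_const_zero, zero_add]
  apply Finset.sum_congr rfl
  intro i _
  congr 1

lemma tail_factor {m p q : ℕ} (hp : p ≤ m) (hq : q ≤ m)
    (b z c : Matrix (Fin m) (Fin m) ℂ)
    (htb : b.BlockTriangular id) (htc : c.BlockTriangular id) :
    (b * z * cᴴ).submatrix (tailEmb m p hp) (tailEmb m q hq)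
      = (b.submatrix (tailEmb m p hp) (tailEmb m p hp))
        * (z.submatrix (tailEmb m p hp) (tailEmb m q hq))
        * ((c.submatrix (tailEmb m q hq) (tailEmb m q hq))ᴴ) := by
  ext i j
  simp only [submatrix_apply, mul_apply, conjTranspose_apply]
  rw [sum_tail hq (fun l => (∑ k, b (tailEmb m p hp i) k * z k l) * star (c (tailEmb m q hq j) l))]
  · apply Finset.sum_congr rfl
    intro l _
    congr 1
    rw [sum_tail hp (fun k => b (tailEmb m p hp i) k * z k (tailEmb m q hq l))]
    intro k hk
    have : b (tailEmb m p hp i) k = 0 := htb (show (k : ℕ) < p + (i : ℕ) by omega)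
    simp [this]
  · intro l hl
    have : c (tailEmb m q hq j) l = 0 := htc (show (l : ℕ) < q + (j : ℕ) by omega)
    simp [this]

lemma tail_submatrix_isUnit {m p : ℕ} (hp : p ≤ m) (b : Matrix (Fin m) (Fin m) ℂ)
    (hb : IsUnit b) (htri : b.BlockTriangular id) :
    IsUnit (b.submatrix (tailEmb m p hp) (tailEmb m p hp)).det := by
  have hdiag : ∀ i : Fin m, b i i ≠ 0 := by
    have hdet : b.det ≠ 0 := by
      simpa using (Matrix.isUnit_iff_isUnit_det b).mp hb
    rw [Matrix.det_of_upperTriangular htri] at hdet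
    intro i hi
    exact hdet (Finset.prod_eq_zero (Finset.mem_univ i) hi)
  have htri' : (b.submatrix (tailEmb m p hp) (tailEmb m p hp)).BlockTriangular id := by
    intro i j hij
    exact htri (show ((tailEmb m p hp j) : ℕ) < ((tailEmb m p hp i) : ℕ) by
      simp only [tailEmb]; have : (j : ℕ) < (i : ℕ) := hij; omega)
  rw [Matrix.det_of_upperTriangular htri']
  simp only [submatrix_apply]
  exact (Finset.prod_ne_zero_iff.mpr (fun i _ => hdiag _)).isUnit

section Sig

variable {n k : Type*} [Fintype n] [Fintype k] [DecidableEq n] [DecidableEq k]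

lemma quadform_diag (d : n → ℝ) (x : n → ℂ) :
    Complex.re (star x ⬝ᵥ ((diagonal (fun i => (d i : ℂ))) *ᵥ x))
      = ∑ i, d i * Complex.normSq (x i) := by
  simp only [dotProduct, mulVec_diagonal, Pi.star_apply, Complex.re_sum]
  apply Finset.sum_congr rfl
  intro i _
  have : (starRingEnd ℂ) (x i) * ((d i : ℂ) * x i) = (d i : ℂ) * ((x i) * (starRingEnd ℂ) (x i)) := by
    ring
  rw [RCLike.star_def, this, Complex.mul_conj]
  simp [Complex.ofReal_mul]

set_option linter.unusedSectionVars false in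
lemma key_quad (A : Matrix n n ℂ) (hA : A.IsHermitian) (P : Matrix n k ℂ) (x : k → ℂ) :
    Complex.re (star x ⬝ᵥ ((Pᴴ * A * P) *ᵥ x))
      = ∑ i, hA.eigenvalues i *
          Complex.normSq ((((star (hA.eigenvectorUnitary : Matrix n n ℂ)) * P) *ᵥ x) i) := by
  set U : Matrix n n ℂ := (hA.eigenvectorUnitary : Matrix n n ℂ) with hU
  set N : Matrix n k ℂ := star U * P with hN
  have hfact : Pᴴ * A * P = Nᴴ * (diagonal (RCLike.ofReal ∘ hA.eigenvalues) : Matrix n n ℂ) * N := by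
    conv_lhs => rw [hA.spectral_theorem]
    simp only [hN, hU, Unitary.conjStarAlgAut_apply, Unitary.coe_star, conjTranspose_mul, star_eq_conjTranspose, conjTranspose_conjTranspose,
      Matrix.mul_assoc]
  rw [hfact, ← Matrix.mulVec_mulVec, ← Matrix.mulVec_mulVec,
    Matrix.dotProduct_mulVec, ← Matrix.star_mulVec]
  exact quadform_diag _ _

lemma key_pos (A : Matrix n n ℂ) (hA : A.IsHermitian) (P : Matrix n k ℂ)
    (hP : ∀ x : k → ℂ, x ≠ 0 → 0 < Complex.re (star x ⬝ᵥ ((Pᴴ * A * P) *ᵥ x))) :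
    Fintype.card k ≤ Fintype.card {i // 0 < hA.eigenvalues i} := by
  by_contra hcard
  push_neg at hcard
  set U : Matrix n n ℂ := (hA.eigenvectorUnitary : Matrix n n ℂ) with hU
  set N0 : Matrix n k ℂ := star U * P with hN0
  set N : Matrix {i // 0 < hA.eigenvalues i} k ℂ := N0.submatrix Subtype.val id with hN
  have hrank : N.rank < Fintype.card k :=
    lt_of_le_of_lt (Matrix.rank_le_card_height N) hcard
  have hker : LinearMap.ker N.mulVecLin ≠ ⊥ := by
    intro hbot
    have := LinearMap.finrank_range_add_finrank_ker N.mulVecLin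
    rw [hbot, finrank_bot] at this
    rw [Matrix.rank] at hrank
    simp only [add_zero] at this
    rw [this] at hrank
    simp [Module.finrank_pi] at hrank
  obtain ⟨x, hxmem, hx⟩ := Submodule.exists_mem_ne_zero_of_ne_bot hker
  have hquad := hP x hx
  rw [key_quad A hA P x] at hquad
  have hzero : ∀ i : n, 0 < hA.eigenvalues i → (N0 *ᵥ x) i = 0 := by
    intro i hi
    have : N.mulVecLin x = 0 := hxmem
    have := congrFun (show N *ᵥ x = 0 from this) ⟨i, hi⟩
    simpa [hN, Matrix.mulVec, dotProduct] using this
  have hle : (∑ i, hA.eigenvalues i * Complex.normSq ((N0 *ᵥ x) i)) ≤ 0 := by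
    apply Finset.sum_nonpos
    intro i _
    by_cases hi : 0 < hA.eigenvalues i
    · rw [hzero i hi]; simp
    · push_neg at hi
      exact mul_nonpos_of_nonpos_of_nonneg hi (Complex.normSq_nonneg _)
  linarith

lemma key_neg (A : Matrix n n ℂ) (hA : A.IsHermitian) (P : Matrix n k ℂ)
    (hP : ∀ x : k → ℂ, x ≠ 0 → Complex.re (star x ⬝ᵥ ((Pᴴ * A * P) *ᵥ x)) < 0) :
    Fintype.card k ≤ Fintype.card {i // hA.eigenvalues i < 0} := by
  by_contra hcard
  push_neg at hcard
  set U : Matrix n n ℂ := (hA.eigenvectorUnitary : Matrix n n ℂ) with hU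
  set N0 : Matrix n k ℂ := star U * P with hN0
  set N : Matrix {i // hA.eigenvalues i < 0} k ℂ := N0.submatrix Subtype.val id with hN
  have hrank : N.rank < Fintype.card k :=
    lt_of_le_of_lt (Matrix.rank_le_card_height N) hcard
  have hker : LinearMap.ker N.mulVecLin ≠ ⊥ := by
    intro hbot
    have := LinearMap.finrank_range_add_finrank_ker N.mulVecLin
    rw [hbot, finrank_bot] at this
    rw [Matrix.rank] at hrank
    simp only [add_zero] at this
    rw [this] at hrank
    simp [Module.finrank_pi] at hrank
  obtain ⟨x, hxmem, hx⟩ := Submodule.exists_mem_ne_zero_of_ne_bot hker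
  have hquad := hP x hx
  rw [key_quad A hA P x] at hquad
  have hzero : ∀ i : n, hA.eigenvalues i < 0 → (N0 *ᵥ x) i = 0 := by
    intro i hi
    have : N.mulVecLin x = 0 := hxmem
    have := congrFun (show N *ᵥ x = 0 from this) ⟨i, hi⟩
    simpa [hN, Matrix.mulVec, dotProduct] using this
  have hle : (0:ℝ) ≤ ∑ i, hA.eigenvalues i * Complex.normSq ((N0 *ᵥ x) i) := by
    apply Finset.sum_nonneg
    intro i _
    by_cases hi : hA.eigenvalues i < 0
    · rw [hzero i hi]; simp
    · push_neg at hi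
      exact mul_nonneg hi (Complex.normSq_nonneg _)
  linarith

lemma eig_congr {A B : Matrix n n ℂ} (h : A = B) (hA : A.IsHermitian) (hB : B.IsHermitian) :
    hA.eigenvalues = hB.eigenvalues := by subst h; rfl

set_option linter.unusedSectionVars false in
lemma sub_quad (B : Matrix n n ℂ) (hB : B.IsHermitian)
    {I : Type*} [Fintype I] [DecidableEq I] (f : I → n) (hf : Function.Injective f)
    (x : I → ℂ) :
    Complex.re (star x ⬝ᵥ
      ((((hB.eigenvectorUnitary : Matrix n n ℂ).submatrix id f)ᴴ * B *
        ((hB.eigenvectorUnitary : Matrix n n ℂ).submatrix id f)) *ᵥ x))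
      = ∑ i, hB.eigenvalues (f i) * Complex.normSq (x i) := by
  set U : Matrix n n ℂ := (hB.eigenvectorUnitary : Matrix n n ℂ) with hU
  have h2 : (U.submatrix id f)ᴴ * B * (U.submatrix id f)
      = diagonal (fun i : I => ((hB.eigenvalues (f i) : ℝ) : ℂ)) := by
    have e1 : (U.submatrix id f)ᴴ = (star U).submatrix f id := by
      rw [conjTranspose_submatrix, star_eq_conjTranspose]
    have e2 : ((star U) * B).submatrix f id = (star U).submatrix f id * B := by
      rw [Matrix.submatrix_mul _ _ f id id Function.bijective_id, Matrix.submatrix_id_id]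
    have e3 : ((star U) * B).submatrix f id * U.submatrix id f
        = ((star U) * B * U).submatrix f f :=
      (Matrix.submatrix_mul _ _ f id f Function.bijective_id).symm
    rw [e1, ← e2, e3, (by simpa [hU] using Matrix.IsHermitian.conjStarAlgAut_star_eigenvectorUnitary hB : star U * B * U = diagonal (RCLike.ofReal ∘ hB.eigenvalues)), Matrix.submatrix_diagonal _ f hf]
    rfl
  rw [h2]
  exact quadform_diag _ _

lemma npos_le (A c : Matrix n n ℂ) (hA : A.IsHermitian) (hB : (c * A * cᴴ).IsHermitian) :
    Fintype.card {i // 0 < hB.eigenvalues i} ≤ Fintype.card {i // 0 < hA.eigenvalues i} := by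
  set Q : Matrix n {i // 0 < hB.eigenvalues i} ℂ :=
    (hB.eigenvectorUnitary : Matrix n n ℂ).submatrix id Subtype.val with hQ
  apply key_pos A hA (cᴴ * Q)
  intro x hx
  have hPAP : (cᴴ * Q)ᴴ * A * (cᴴ * Q) = Qᴴ * (c * A * cᴴ) * Q := by
    rw [conjTranspose_mul, conjTranspose_conjTranspose]
    simp only [Matrix.mul_assoc]
  rw [hPAP, sub_quad (c * A * cᴴ) hB Subtype.val Subtype.val_injective x]
  apply Finset.sum_pos'
  · intro i _
    exact mul_nonneg i.2.le (Complex.normSq_nonneg _)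
  · obtain ⟨i, hi⟩ := Function.ne_iff.mp hx
    exact ⟨i, Finset.mem_univ i, mul_pos i.2 (Complex.normSq_pos.mpr hi)⟩

lemma nneg_le (A c : Matrix n n ℂ) (hA : A.IsHermitian) (hB : (c * A * cᴴ).IsHermitian) :
    Fintype.card {i // hB.eigenvalues i < 0} ≤ Fintype.card {i // hA.eigenvalues i < 0} := by
  set Q : Matrix n {i // hB.eigenvalues i < 0} ℂ :=
    (hB.eigenvectorUnitary : Matrix n n ℂ).submatrix id Subtype.val with hQ
  apply key_neg A hA (cᴴ * Q)
  intro x hx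
  have hPAP : (cᴴ * Q)ᴴ * A * (cᴴ * Q) = Qᴴ * (c * A * cᴴ) * Q := by
    rw [conjTranspose_mul, conjTranspose_conjTranspose]
    simp only [Matrix.mul_assoc]
  rw [hPAP, sub_quad (c * A * cᴴ) hB Subtype.val Subtype.val_injective x]
  have h0 : 0 < ∑ i : {i // hB.eigenvalues i < 0},
      -(hB.eigenvalues i.1 * Complex.normSq (x i)) := by
    apply Finset.sum_pos'
    · intro i _
      simp only [neg_nonneg]
      exact mul_nonpos_of_nonpos_of_nonneg i.2.le (Complex.normSq_nonneg _)
    · obtain ⟨i, hi⟩ := Function.ne_iff.mp hx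
      refine ⟨i, Finset.mem_univ i, ?_⟩
      simp only [neg_pos]
      exact mul_neg_of_neg_of_pos i.2 (Complex.normSq_pos.mpr hi)
  rw [Finset.sum_neg_distrib] at h0
  linarith

set_option linter.unusedSectionVars false in
lemma count_partition (μ : n → ℝ) :
    Fintype.card {i // 0 < μ i} + Fintype.card {i // μ i < 0} + Fintype.card {i // μ i = 0}
      = Fintype.card n := by
  classical
  rw [Fintype.card_subtype, Fintype.card_subtype, Fintype.card_subtype]
  have d1 : Disjoint (Finset.univ.filter fun i => 0 < μ i)
      (Finset.univ.filter fun i => μ i < 0) := by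
    rw [Finset.disjoint_left]
    intro a ha hb
    simp only [Finset.mem_filter] at ha hb
    linarith [ha.2, hb.2]
  have d2 : Disjoint ((Finset.univ.filter fun i => 0 < μ i) ∪
      (Finset.univ.filter fun i => μ i < 0)) (Finset.univ.filter fun i => μ i = 0) := by
    rw [Finset.disjoint_left]
    intro a ha hb
    simp only [Finset.mem_filter, Finset.mem_union] at ha hb
    rcases ha with h | h <;> linarith [hb.2]
  rw [← Finset.card_union_of_disjoint d1, ← Finset.card_union_of_disjoint d2]
  rw [show (Finset.univ.filter fun i => 0 < μ i) ∪ (Finset.univ.filter fun i => μ i < 0) ∪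
      (Finset.univ.filter fun i => μ i = 0) = Finset.univ from ?_, Finset.card_univ]
  ext i
  simp only [Finset.mem_union, Finset.mem_filter, Finset.mem_univ, true_and, iff_true]
  rcases lt_trichotomy (μ i) 0 with h | h | h
  · exact Or.inl (Or.inr h)
  · exact Or.inr h
  · exact Or.inl (Or.inl h)

lemma inv_conj (c : Matrix n n ℂ) (hc : IsUnit c) (A : Matrix n n ℂ) :
    (↑hc.unit⁻¹ : Matrix n n ℂ) * (c * A * cᴴ) * ((↑hc.unit⁻¹ : Matrix n n ℂ))ᴴ = A := by
  set d : Matrix n n ℂ := (↑hc.unit⁻¹ : Matrix n n ℂ) with hd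
  have h1 : d * c = 1 := hc.unit.inv_mul
  have h2 : cᴴ * dᴴ = 1 := by rw [← conjTranspose_mul, h1, conjTranspose_one]
  calc d * (c * A * cᴴ) * dᴴ = (d * c) * A * (cᴴ * dᴴ) := by
        simp only [Matrix.mul_assoc]
    _ = A := by rw [h1, h2, Matrix.one_mul, Matrix.mul_one]

lemma npos_eq (A c : Matrix n n ℂ) (hA : A.IsHermitian) (hc : IsUnit c)
    (hB : (c * A * cᴴ).IsHermitian) :
    Fintype.card {i // 0 < hB.eigenvalues i} = Fintype.card {i // 0 < hA.eigenvalues i} := by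
  refine le_antisymm (npos_le A c hA hB) ?_
  set d : Matrix n n ℂ := (↑hc.unit⁻¹ : Matrix n n ℂ) with hd
  have h3 : (d * (c * A * cᴴ) * dᴴ).IsHermitian := by
    rw [inv_conj c hc A]; exact hA
  have := npos_le (c * A * cᴴ) d hB h3
  have he : h3.eigenvalues = hA.eigenvalues := eig_congr (inv_conj c hc A) h3 hA
  rwa [he] at this

lemma nneg_eq (A c : Matrix n n ℂ) (hA : A.IsHermitian) (hc : IsUnit c)
    (hB : (c * A * cᴴ).IsHermitian) :
    Fintype.card {i // hB.eigenvalues i < 0} = Fintype.card {i // hA.eigenvalues i < 0} := by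
  refine le_antisymm (nneg_le A c hA hB) ?_
  set d : Matrix n n ℂ := (↑hc.unit⁻¹ : Matrix n n ℂ) with hd
  have h3 : (d * (c * A * cᴴ) * dᴴ).IsHermitian := by
    rw [inv_conj c hc A]; exact hA
  have := nneg_le (c * A * cᴴ) d hB h3
  have he : h3.eigenvalues = hA.eigenvalues := eig_congr (inv_conj c hc A) h3 hA
  rwa [he] at this

end Sig

/-- The signature of a Hermitian matrix: (positives, negatives, nullity). -/
noncomputable def signature {k : ℕ} {A : Matrix (Fin k) (Fin k) ℂ}
    (hA : A.IsHermitian) : ℕ × ℕ × ℕ :=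
  (Nat.card {i // 0 < hA.eigenvalues i},
   Nat.card {i // hA.eigenvalues i < 0},
   Nat.card {i // hA.eigenvalues i = 0})

lemma signature_eq_of_eq {k : ℕ} {A B : Matrix (Fin k) (Fin k) ℂ} (h : A = B)
    (hA : A.IsHermitian) (hB : B.IsHermitian) : signature hA = signature hB := by
  subst h; rfl

lemma signature_congr {k : ℕ} (A c : Matrix (Fin k) (Fin k) ℂ) (hA : A.IsHermitian)
    (hc : IsUnit c) (hB : (c * A * cᴴ).IsHermitian) : signature hB = signature hA := by
  have hp := npos_eq A c hA hc hB
  have hn := nneg_eq A c hA hc hB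
  have h0 : Fintype.card {i // hB.eigenvalues i = 0}
      = Fintype.card {i // hA.eigenvalues i = 0} := by
    have t1 := count_partition hB.eigenvalues
    have t2 := count_partition hA.eigenvalues
    omega
  simp only [signature, Nat.card_eq_fintype_card, hp, hn, h0]

/-- The quantities `rank z_{[p]ᶜ[q]ᶜ}` for `0 ≤ p ≤ q < m` and `sign z_{[p]ᶜ}` for
`0 ≤ p < m` are invariant under the action `b · z = b z b*` of the invertible upper
triangular group on Hermitian `m × m` matrices. -/
theorem stmt5 {m : ℕ} (z : Matrix (Fin m) (Fin m) ℂ) (hz : z.IsHermitian)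
    (b : Matrix (Fin m) (Fin m) ℂ) (hb : IsUnit b) (htri : b.BlockTriangular id) :
    (∀ (p q : ℕ) (hpq : p ≤ q) (hq : q < m),
        ((b * z * bᴴ).submatrix (tailEmb m p (le_trans hpq hq.le))
            (tailEmb m q hq.le)).rank =
        (z.submatrix (tailEmb m p (le_trans hpq hq.le)) (tailEmb m q hq.le)).rank) ∧
    (∀ (p : ℕ) (hp : p < m),
        signature ((isHermitian_mul_mul_conjTranspose b hz).submatrix
            (tailEmb m p hp.le)) =
        signature (hz.submatrix (tailEmb m p hp.le))) := by
  constructor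
  · intro p q hpq hq
    have hpm : p ≤ m := le_trans hpq hq.le
    rw [tail_factor hpm hq.le b z b htri htri,
      Matrix.rank_mul_eq_left_of_isUnit_det _ _
        (by rw [Matrix.det_conjTranspose]; exact (tail_submatrix_isUnit hq.le b hb htri).star),
      Matrix.rank_mul_eq_right_of_isUnit_det _ _ (tail_submatrix_isUnit hpm b hb htri)]
  · intro p hp
    have hfac := tail_factor hp.le hp.le b z b htri htri
    set c := b.submatrix (tailEmb m p hp.le) (tailEmb m p hp.le) with hc
    have hcu : IsUnit c := (Matrix.isUnit_iff_isUnit_det c).mpr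
      (tail_submatrix_isUnit hp.le b hb htri)
    have hB : (c * (z.submatrix (tailEmb m p hp.le) (tailEmb m p hp.le)) * cᴴ).IsHermitian :=
      hfac ▸ ((isHermitian_mul_mul_conjTranspose b hz).submatrix (tailEmb m p hp.le))
    rw [signature_eq_of_eq hfac _ hB]
    exact signature_congr _ c (hz.submatrix _) hcu hB
end

section
/- A signed partial involution τ ∈ SPI⁺_m can be reconstructed from the data {rank τ_{[p]ᶜ,[q]ᶜ}}_{0≤p≤q<m} and {sign τ_{[p]ᶜ}}_{0≤p<m}; consequently these invariants separate elements of SPI⁺_m: if τ ≠ τ' in SPI⁺_m then some rank or signature invariant differs. -/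
open Matrix

theorem spiMap_isHermitian {m : ℕ} {τ : Matrix (Fin m) (Fin m) ℤ} (h : τ.IsSymm) :
    (τ.map (fun x : ℤ => (x : ℂ))).IsHermitian := by
  show _ᴴ = _
  ext i j
  simp [Matrix.conjTranspose_apply, Matrix.map_apply, h.apply i j]

/- ### Auxiliary lemmas -/

open scoped ComplexOrder in
lemma rank_eq_card_support {k l : ℕ} (M : Matrix (Fin k) (Fin l) ℂ)
    (hrow : ∀ i j j', M i j ≠ 0 → M i j' ≠ 0 → j = j')
    (hcol : ∀ i i' j, M i j ≠ 0 → M i' j ≠ 0 → i = i') :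
    M.rank = (Finset.univ.filter (fun x : Fin k × Fin l => M x.1 x.2 ≠ 0)).card := by
  classical
  set d : Fin l → ℂ := fun j => ∑ i, star (M i j) * M i j with hd
  have hdiag : Mᴴ * M = Matrix.diagonal d := by
    ext j j'
    by_cases hjj : j = j'
    · subst hjj; simp [Matrix.mul_apply, Matrix.conjTranspose_apply, hd]
    · simp only [Matrix.mul_apply, Matrix.conjTranspose_apply,
        Matrix.diagonal_apply_ne _ hjj]
      refine Finset.sum_eq_zero fun i _ => ?_
      by_cases h1 : M i j = 0
      · simp [h1]
      · by_cases h2 : M i j' = 0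
        · simp [h2]
        · exact absurd (hrow i j j' h1 h2) hjj
  have hdre : ∀ j, d j = ((∑ i, Complex.normSq (M i j) : ℝ) : ℂ) := by
    intro j
    rw [hd]; push_cast
    refine Finset.sum_congr rfl fun i _ => ?_
    rw [Complex.normSq_eq_conj_mul_self]; rfl
  have hdne : ∀ j, d j ≠ 0 ↔ ∃ i, M i j ≠ 0 := by
    intro j
    constructor
    · intro hne
      by_contra hall
      push_neg at hall
      exact hne (by rw [hd]; exact Finset.sum_eq_zero fun i _ => by simp [hall i])
    · rintro ⟨i, hi⟩
      rw [hdre]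
      have hpos : (0:ℝ) < ∑ i, Complex.normSq (M i j) :=
        Finset.sum_pos' (fun i _ => Complex.normSq_nonneg _)
          ⟨i, Finset.mem_univ i, Complex.normSq_pos.2 hi⟩
      exact_mod_cast hpos.ne'
  have hcard : ∀ j, (Finset.univ.filter fun i => M i j ≠ 0).card
      = if ∃ i, M i j ≠ 0 then 1 else 0 := by
    intro j
    split_ifs with hex
    · obtain ⟨i, hi⟩ := hex
      rw [Finset.card_eq_one]
      refine ⟨i, ?_⟩
      ext i'
      simp only [Finset.mem_filter, Finset.mem_univ, true_and, Finset.mem_singleton]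
      exact ⟨fun h' => hcol i' i j h' hi, fun h' => h' ▸ hi⟩
    · push_neg at hex
      exact Finset.card_eq_zero.2 (Finset.filter_eq_empty_iff.2 fun i _ => by simpa using hex i)
  calc M.rank = (Mᴴ * M).rank := (Matrix.rank_conjTranspose_mul_self M).symm
    _ = (Matrix.diagonal d).rank := by rw [hdiag]
    _ = Fintype.card {j // d j ≠ 0} := Matrix.rank_diagonal d
    _ = (Finset.univ.filter fun j => ∃ i, M i j ≠ 0).card := by
        rw [Fintype.card_subtype]
        congr 1
        exact Finset.filter_congr fun j _ => by simp [hdne j]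
    _ = (Finset.univ.filter (fun x : Fin k × Fin l => M x.1 x.2 ≠ 0)).card := by
        rw [Finset.card_filter, Finset.card_filter, Fintype.sum_prod_type_right]
        refine (Finset.sum_congr rfl fun j _ => ?_).symm
        rw [← Finset.card_filter, hcard j]

def cnt {m : ℕ} (τ : Matrix (Fin m) (Fin m) ℤ) (p q : ℕ) : ℕ :=
  (Finset.univ.filter (fun x : Fin m × Fin m => p ≤ x.1.1 ∧ q ≤ x.2.1 ∧ τ x.1 x.2 ≠ 0)).card

lemma tailEmb_inj {m p : ℕ} (hp : p ≤ m) : Function.Injective (tailEmb m p hp) := by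
  intro i j hij
  have := congrArg Fin.val hij
  simp only [tailEmb] at this
  exact Fin.ext (by omega)

lemma cnt_symm {m : ℕ} {τ : Matrix (Fin m) (Fin m) ℤ} (hs : τ.IsSymm) (p q : ℕ) :
    cnt τ p q = cnt τ q p := by
  classical
  unfold cnt
  apply Finset.card_bij (fun (x : Fin m × Fin m) _ => (x.2, x.1))
  · intro x hx
    simp only [Finset.mem_filter, Finset.mem_univ, true_and] at hx ⊢
    exact ⟨hx.2.1, hx.1, by rw [hs.apply]; exact hx.2.2⟩
  · intro x _ y _ hxy
    exact Prod.ext (congrArg Prod.snd hxy) (congrArg Prod.fst hxy)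
  · intro y hy
    simp only [Finset.mem_filter, Finset.mem_univ, true_and] at hy ⊢
    exact ⟨(y.2, y.1), ⟨hy.2.1, hy.1, by rw [hs.apply]; exact hy.2.2⟩, rfl⟩

lemma cnt_top {m : ℕ} (τ : Matrix (Fin m) (Fin m) ℤ) {p q : ℕ} (hm : m ≤ p ∨ m ≤ q) :
    cnt τ p q = 0 := by
  classical
  refine Finset.card_eq_zero.2 (Finset.filter_eq_empty_iff.2 fun x _ => ?_)
  rintro ⟨h1, h2, -⟩
  rcases hm with hm | hm
  · have := x.1.isLt; omega
  · have := x.2.isLt; omega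

lemma cnt_point {m : ℕ} (τ : Matrix (Fin m) (Fin m) ℤ) (a b : Fin m) :
    (if τ a b ≠ 0 then 1 else 0)
      = ∑ x : Fin m × Fin m, (if x.1 = a ∧ x.2 = b ∧ τ x.1 x.2 ≠ 0 then 1 else 0) := by
  classical
  rw [Finset.sum_eq_single (a, b)
    (fun x _ hx => by rw [if_neg]; rintro ⟨h1, h2, -⟩; exact hx (Prod.ext h1 h2))
    (fun h => absurd (Finset.mem_univ _) h)]
  simp

lemma cnt_ie {m : ℕ} (τ : Matrix (Fin m) (Fin m) ℤ) (a b : Fin m) :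
    cnt τ a.1 b.1 + cnt τ (a.1 + 1) (b.1 + 1)
      = cnt τ (a.1 + 1) b.1 + cnt τ a.1 (b.1 + 1) + (if τ a b ≠ 0 then 1 else 0) := by
  classical
  simp only [cnt, Finset.card_filter]
  rw [cnt_point τ a b, ← Finset.sum_add_distrib, ← Finset.sum_add_distrib,
    ← Finset.sum_add_distrib]
  refine Finset.sum_congr rfl fun x _ => ?_
  by_cases ht : τ x.1 x.2 = 0
  · simp [ht]
  · simp only [ht, ne_eq, not_false_eq_true, and_true, Fin.ext_iff]
    split_ifs <;> omega

lemma rank_eq_cnt {m : ℕ} (τ : Matrix (Fin m) (Fin m) ℤ) (h : IsSPIplus τ)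
    {p q : ℕ} (hp : p ≤ m) (hq : q ≤ m) :
    ((τ.map (fun x : ℤ => (x : ℂ))).submatrix (tailEmb m p hp) (tailEmb m q hq)).rank
      = cnt τ p q := by
  classical
  obtain ⟨hsymm, hval, hrowτ, hcolτ, hnn⟩ := h
  set M := (τ.map (fun x : ℤ => (x : ℂ))).submatrix (tailEmb m p hp) (tailEmb m q hq) with hM
  have hMne : ∀ i j, M i j ≠ 0 ↔ τ (tailEmb m p hp i) (tailEmb m q hq j) ≠ 0 := by
    intro i j
    simp [hM, Matrix.submatrix_apply, Matrix.map_apply, Int.cast_eq_zero]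
  rw [rank_eq_card_support M
    (fun i j j' h1 h2 => tailEmb_inj hq
      (hrowτ _ _ _ ((hMne i j).1 h1) ((hMne i j').1 h2)))
    (fun i i' j h1 h2 => tailEmb_inj hp
      (hcolτ _ _ _ ((hMne i j).1 h1) ((hMne i' j).1 h2)))]
  unfold cnt
  apply Finset.card_bij (fun (x : Fin (m - p) × Fin (m - q)) _ =>
    (tailEmb m p hp x.1, tailEmb m q hq x.2))
  · intro x hx
    simp only [Finset.mem_filter, Finset.mem_univ, true_and] at hx ⊢
    exact ⟨by simp [tailEmb], by simp [tailEmb], (hMne x.1 x.2).1 hx⟩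
  · intro x _ y _ hxy
    exact Prod.ext (tailEmb_inj hp (congrArg Prod.fst hxy))
      (tailEmb_inj hq (congrArg Prod.snd hxy))
  · intro y hy
    simp only [Finset.mem_filter, Finset.mem_univ, true_and] at hy
    obtain ⟨hy1, hy2, hyne⟩ := hy
    have hb1 : y.1.1 - p < m - p := by have := y.1.isLt; omega
    have hb2 : y.2.1 - q < m - q := by have := y.2.isLt; omega
    have e1 : tailEmb m p hp ⟨y.1.1 - p, hb1⟩ = y.1 := Fin.ext (by simp [tailEmb]; omega)
    have e2 : tailEmb m q hq ⟨y.2.1 - q, hb2⟩ = y.2 := Fin.ext (by simp [tailEmb]; omega)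
    refine ⟨(⟨y.1.1 - p, hb1⟩, ⟨y.2.1 - q, hb2⟩), ?_, ?_⟩
    · simp only [Finset.mem_filter, Finset.mem_univ, true_and]
      rw [hMne, e1, e2]; exact hyne
    · exact Prod.ext e1 e2

lemma submatrix_cube {m : ℕ} {τ : Matrix (Fin m) (Fin m) ℤ} (h : IsSPIplus τ)
    {p : ℕ} (hp : p ≤ m) :
    τ.submatrix (tailEmb m p hp) (tailEmb m p hp) *
      τ.submatrix (tailEmb m p hp) (tailEmb m p hp) *
      τ.submatrix (tailEmb m p hp) (tailEmb m p hp)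
      = τ.submatrix (tailEmb m p hp) (tailEmb m p hp) := by
  obtain ⟨hsymm, hval, hrow, hcol, hnn⟩ := h
  set e := tailEmb m p hp with he
  set B := τ.submatrix e e with hB
  have hinj : Function.Injective e := tailEmb_inj hp
  have hBB : ∀ i j, i ≠ j → (B * B) i j = 0 := by
    intro i j hij
    rw [Matrix.mul_apply]
    refine Finset.sum_eq_zero fun k _ => ?_
    by_cases h1 : B i k = 0
    · rw [h1, zero_mul]
    by_cases h2 : B k j = 0
    · rw [h2, mul_zero]
    exfalso
    have h2' : τ (e j) (e k) ≠ 0 := by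
      rw [hsymm.apply]; exact h2
    exact hij (hinj (hcol (e i) (e j) (e k) h1 h2'))
  ext i j
  rw [Matrix.mul_apply, Finset.sum_eq_single i
    (fun k _ hk => by rw [hBB i k (Ne.symm hk), zero_mul]) (by simp)]
  by_cases hb : B i j = 0
  · rw [hb, mul_zero]
  · have h1 : (B * B) i i = 1 := by
      rw [Matrix.mul_apply, Finset.sum_eq_single j
        (fun k _ hk => by
          by_cases hik : B i k = 0
          · rw [hik, zero_mul]
          · exact absurd (hinj (hrow (e i) (e k) (e j) hik hb)) hk)
        (by simp)]
      have hji : B j i = B i j := hsymm.apply (e i) (e j)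
      rw [hji]
      rcases hval (e i) (e j) with hv | hv | hv
      · show τ (e i) (e j) * τ (e i) (e j) = 1
        rw [hv]; norm_num
      · exact absurd hv hb
      · show τ (e i) (e j) * τ (e i) (e j) = 1
        rw [hv]; norm_num
    rw [h1, one_mul]

lemma map_submatrix_cube {m : ℕ} {τ : Matrix (Fin m) (Fin m) ℤ} (h : IsSPIplus τ)
    {p : ℕ} (hp : p ≤ m) :
    (τ.map (fun x : ℤ => (x : ℂ))).submatrix (tailEmb m p hp) (tailEmb m p hp) *
      (τ.map (fun x : ℤ => (x : ℂ))).submatrix (tailEmb m p hp) (tailEmb m p hp) *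
      (τ.map (fun x : ℤ => (x : ℂ))).submatrix (tailEmb m p hp) (tailEmb m p hp)
      = (τ.map (fun x : ℤ => (x : ℂ))).submatrix (tailEmb m p hp) (tailEmb m p hp) := by
  have hAB : (τ.map (fun x : ℤ => (x : ℂ))).submatrix (tailEmb m p hp) (tailEmb m p hp)
      = (τ.submatrix (tailEmb m p hp) (tailEmb m p hp)).map (Int.castRingHom ℂ) := by
    ext i j; rfl
  rw [hAB, ← Matrix.map_mul, ← Matrix.map_mul, submatrix_cube h hp]

lemma trace_eq_sum_eig {k : ℕ} {A : Matrix (Fin k) (Fin k) ℂ} (hA : A.IsHermitian) :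
    A.trace = ∑ i, (hA.eigenvalues i : ℂ) := by
  conv_lhs => rw [hA.spectral_theorem]
  rw [Unitary.conjStarAlgAut_apply, Matrix.trace_mul_cycle, Matrix.mem_unitaryGroup_iff'.mp (hA.eigenvectorUnitary).2,
    one_mul, Matrix.trace_diagonal]
  simp [Function.comp]

lemma eig_cube {k : ℕ} {A : Matrix (Fin k) (Fin k) ℂ} (hA : A.IsHermitian)
    (h3 : A * A * A = A) (i : Fin k) :
    hA.eigenvalues i = -1 ∨ hA.eigenvalues i = 0 ∨ hA.eigenvalues i = 1 := by
  set μ := hA.eigenvalues i with hμ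
  have hv := hA.mulVec_eigenvectorBasis i
  set v := ⇑(hA.eigenvectorBasis i) with hvdef
  have hv3 : (A * A * A) *ᵥ v = (μ * μ * μ) • v := by
    rw [← Matrix.mulVec_mulVec, ← Matrix.mulVec_mulVec, hv, Matrix.mulVec_smul, hv,
      Matrix.mulVec_smul, Matrix.mulVec_smul, hv, smul_smul, smul_smul]
  rw [h3, hv] at hv3
  have hvne : v ≠ 0 := by
    intro hc
    refine hA.eigenvectorBasis.orthonormal.ne_zero i ?_
    apply PiLp.ext
    intro j
    exact congrFun hc j
  have h0 : (μ * μ * μ - μ) • v = 0 := by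
    rw [sub_smul, ← hv3, sub_self]
  rcases smul_eq_zero.mp h0 with h0 | h0
  swap
  · exact absurd h0 hvne
  have hfac : μ * (μ - 1) * (μ + 1) = 0 := by
    have : μ * (μ - 1) * (μ + 1) = μ * μ * μ - μ := by ring
    rw [this, h0]
  rcases mul_eq_zero.mp hfac with hf | hf
  · rcases mul_eq_zero.mp hf with hf' | hf'
    · right; left; exact hf'
    · right; right; linarith
  · left; linarith

lemma trace_eq_counts {k : ℕ} {A : Matrix (Fin k) (Fin k) ℂ} (hA : A.IsHermitian)
    (h3 : A * A * A = A) :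
    A.trace = (Nat.card {i // 0 < hA.eigenvalues i} : ℂ)
      - (Nat.card {i // hA.eigenvalues i < 0} : ℂ) := by
  classical
  rw [trace_eq_sum_eig hA]
  have hpt : ∀ i, (hA.eigenvalues i : ℂ)
      = (if 0 < hA.eigenvalues i then (1 : ℂ) else 0)
        - (if hA.eigenvalues i < 0 then (1 : ℂ) else 0) := by
    intro i
    rcases eig_cube hA h3 i with hv | hv | hv <;> rw [hv] <;> norm_num
  rw [Finset.sum_congr rfl fun i _ => hpt i, Finset.sum_sub_distrib,
    Finset.sum_boole, Finset.sum_boole, Nat.card_eq_fintype_card,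
    Nat.card_eq_fintype_card, Fintype.card_subtype, Fintype.card_subtype]

lemma tail_sum {m : ℕ} (σ : Matrix (Fin m) (Fin m) ℤ) {p : ℕ} (hp : p ≤ m) :
    ∑ i : Fin (m - p), σ (tailEmb m p hp i) (tailEmb m p hp i)
      = ∑ j ∈ Finset.univ.filter (fun j : Fin m => p ≤ j.1), σ j j := by
  apply Finset.sum_bij (fun (i : Fin (m - p)) _ => tailEmb m p hp i)
  · intro i _
    simp [tailEmb]
  · intro i _ j _ hij
    exact tailEmb_inj hp hij
  · intro j hj
    simp only [Finset.mem_filter, Finset.mem_univ, true_and] at hj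
    have hb : j.1 - p < m - p := by have := j.isLt; omega
    exact ⟨⟨j.1 - p, hb⟩, Finset.mem_univ _, (Fin.ext (by simp [tailEmb]; omega)).symm⟩
  · intro i _
    rfl

/-- The invariants `{rank τ_{[p]ᶜ[q]ᶜ}}` and `{sign τ_{[p]ᶜ}}` separate elements of
`SPI⁺_m`: if these invariants all agree for `τ, τ' ∈ SPI⁺_m`, then `τ = τ'`. -/
theorem stmt6 {m : ℕ} (τ τ' : Matrix (Fin m) (Fin m) ℤ)
    (h : IsSPIplus τ) (h' : IsSPIplus τ')
    (hrank : ∀ (p q : ℕ) (hpq : p ≤ q) (hq : q < m),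
        ((τ.map (fun x : ℤ => (x : ℂ))).submatrix
            (tailEmb m p (le_trans hpq hq.le)) (tailEmb m q hq.le)).rank =
        ((τ'.map (fun x : ℤ => (x : ℂ))).submatrix
            (tailEmb m p (le_trans hpq hq.le)) (tailEmb m q hq.le)).rank)
    (hsign : ∀ (p : ℕ) (hp : p < m),
        signature ((spiMap_isHermitian h.1).submatrix (tailEmb m p hp.le)) =
        signature ((spiMap_isHermitian h'.1).submatrix (tailEmb m p hp.le))) :
    τ = τ' := by
  classical
  have hcnt : ∀ p q : ℕ, cnt τ p q = cnt τ' p q := by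
    intro p q
    rcases le_or_gt m q with hq | hq
    · rw [cnt_top τ (Or.inr hq), cnt_top τ' (Or.inr hq)]
    rcases le_or_gt m p with hp | hp
    · rw [cnt_top τ (Or.inl hp), cnt_top τ' (Or.inl hp)]
    rcases le_or_gt p q with hpq | hqp
    · rw [← rank_eq_cnt τ h (le_trans hpq hq.le) hq.le,
        ← rank_eq_cnt τ' h' (le_trans hpq hq.le) hq.le]
      exact hrank p q hpq hq
    · rw [cnt_symm h.1, cnt_symm h'.1,
        ← rank_eq_cnt τ h (le_trans hqp.le hp.le) hp.le,
        ← rank_eq_cnt τ' h' (le_trans hqp.le hp.le) hp.le]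
      exact hrank q p hqp.le hp
  have hsupp : ∀ a b : Fin m, (τ a b = 0 ↔ τ' a b = 0) := by
    intro a b
    have h1 := cnt_ie τ a b
    have h2 := cnt_ie τ' a b
    rw [hcnt a.1 b.1, hcnt (a.1 + 1) (b.1 + 1), hcnt (a.1 + 1) b.1,
      hcnt a.1 (b.1 + 1)] at h1
    have hite : (if τ a b ≠ 0 then 1 else 0) = (if τ' a b ≠ 0 then (1 : ℕ) else 0) := by
      omega
    by_cases hx : τ a b = 0 <;> by_cases hy : τ' a b = 0
    · exact iff_of_true hx hy
    · simp [hx, hy] at hite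
    · simp [hx, hy] at hite
    · exact iff_of_false hx hy
  have htr : ∀ (p : ℕ), p ≤ m →
      ∑ j ∈ Finset.univ.filter (fun j : Fin m => p ≤ j.1), τ j j
        = ∑ j ∈ Finset.univ.filter (fun j : Fin m => p ≤ j.1), τ' j j := by
    intro p hp
    rcases eq_or_lt_of_le hp with heq | hp'
    · have hfe : Finset.univ.filter (fun j : Fin m => p ≤ j.1) = ∅ :=
        Finset.filter_eq_empty_iff.2 fun j _ => by have := j.isLt; omega
      rw [hfe, Finset.sum_empty, Finset.sum_empty]
    · have hsig := hsign p hp'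
      have t1 := trace_eq_counts ((spiMap_isHermitian h.1).submatrix (tailEmb m p hp'.le))
        (map_submatrix_cube h hp'.le)
      have t2 := trace_eq_counts ((spiMap_isHermitian h'.1).submatrix (tailEmb m p hp'.le))
        (map_submatrix_cube h' hp'.le)
      have e1 : (Nat.card
            {i // 0 < ((spiMap_isHermitian h.1).submatrix (tailEmb m p hp'.le)).eigenvalues i})
          = Nat.card
            {i // 0 < ((spiMap_isHermitian h'.1).submatrix (tailEmb m p hp'.le)).eigenvalues i} :=
        congrArg Prod.fst hsig
      have e2 : (Nat.card
            {i // ((spiMap_isHermitian h.1).submatrix (tailEmb m p hp'.le)).eigenvalues i < 0})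
          = Nat.card
            {i // ((spiMap_isHermitian h'.1).submatrix (tailEmb m p hp'.le)).eigenvalues i < 0} :=
        congrArg (fun x => x.2.1) hsig
      have ttr : ((τ.map (fun x : ℤ => (x : ℂ))).submatrix (tailEmb m p hp'.le)
            (tailEmb m p hp'.le)).trace
          = ((τ'.map (fun x : ℤ => (x : ℂ))).submatrix (tailEmb m p hp'.le)
            (tailEmb m p hp'.le)).trace := by
        rw [t1, t2, e1, e2]
      have htA : ∀ (σ : Matrix (Fin m) (Fin m) ℤ),
          ((σ.map (fun x : ℤ => (x : ℂ))).submatrix (tailEmb m p hp'.le)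
            (tailEmb m p hp'.le)).trace
          = ((∑ i : Fin (m - p), σ (tailEmb m p hp'.le i) (tailEmb m p hp'.le i) : ℤ) : ℂ) := by
        intro σ
        simp only [Matrix.trace, Matrix.diag_apply, Matrix.submatrix_apply, Matrix.map_apply]
        push_cast
        rfl
      rw [htA τ, htA τ'] at ttr
      have hZ : ∑ i : Fin (m - p), τ (tailEmb m p hp'.le i) (tailEmb m p hp'.le i)
          = ∑ i : Fin (m - p), τ' (tailEmb m p hp'.le i) (tailEmb m p hp'.le i) := by
        exact_mod_cast ttr
      rw [tail_sum τ hp'.le, tail_sum τ' hp'.le] at hZ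
      exact hZ
  have hdiag : ∀ a : Fin m, τ a a = τ' a a := by
    intro a
    have h1 := htr a.1 a.2.le
    have h2 := htr (a.1 + 1) (by have := a.isLt; omega)
    have hsplit : ∀ σ : Matrix (Fin m) (Fin m) ℤ,
        ∑ j ∈ Finset.univ.filter (fun j : Fin m => a.1 ≤ j.1), σ j j
          = σ a a + ∑ j ∈ Finset.univ.filter (fun j : Fin m => a.1 + 1 ≤ j.1), σ j j := by
      intro σ
      have hfe : Finset.univ.filter (fun j : Fin m => a.1 ≤ j.1)
          = insert a (Finset.univ.filter (fun j : Fin m => a.1 + 1 ≤ j.1)) := by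
        ext j
        simp only [Finset.mem_filter, Finset.mem_univ, true_and, Finset.mem_insert, Fin.ext_iff]
        omega
      rw [hfe, Finset.sum_insert (by simp)]
    rw [hsplit τ, hsplit τ', h2] at h1
    omega
  ext a b
  by_cases hab : a = b
  · subst hab; exact hdiag a
  · have hiff := hsupp a b
    have h0 := h.2.2.2.2 a b hab
    have h0' := h'.2.2.2.2 a b hab
    rcases h.2.1 a b with hv | hv | hv <;> rcases h'.2.1 a b with hv' | hv' | hv' <;> omega
end

section
/- There is a bijection between the set of decorated n-clans Γ(n) and the disjoint union over I ⊆ [n], writing m = |I|, over pairs (p,q) with p,q ≥ 0 and p+q ≤ m, and over J ⊆ [m] with |J| = p+q, of the sets Γ(p,q) of (p,q)-clans. Equivalently, Σ_{I⊆[n]} Σ_{p+q≤|I|} C(|I|, p+q) · #Γ(p,q) = #Γ(n). -/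
/-- The arc condition for clans. -/
def ArcCond {n k : ℕ} (γ : Fin n → Fin n ⊕ Fin k) : Prop :=
  ∀ i j : Fin n, γ i = Sum.inl j → i ≠ j ∧ γ j = Sum.inl i

/-- The sign condition for `(p,q)`-clans (`Sum.inr 0` encodes `+`, `Sum.inr 1`
encodes `-`). -/
def SgnCond (p q : ℕ) (γ : Fin (p + q) → Fin (p + q) ⊕ Fin 2) : Prop :=
  ((Finset.univ.filter fun i => γ i = Sum.inr 0).card : ℤ) -
    ((Finset.univ.filter fun i => γ i = Sum.inr 1).card : ℤ) = (p : ℤ) - (q : ℤ)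

/-- The cardinality of the set `Γ(p,q)` of `(p,q)`-clans. -/
noncomputable def cardClanPQ (p q : ℕ) : ℕ :=
  Nat.card {γ : Fin (p + q) → Fin (p + q) ⊕ Fin 2 // ArcCond γ ∧ SgnCond p q γ}

open Finset

instance arcDec {n k : ℕ} (γ : Fin n → Fin n ⊕ Fin k) : Decidable (ArcCond γ) :=
  decidable_of_iff (∀ i j : Fin n, γ i = Sum.inl j → i ≠ j ∧ γ j = Sum.inl i) Iff.rfl

instance sgnDec (p q : ℕ) (γ : Fin (p + q) → Fin (p + q) ⊕ Fin 2) : Decidable (SgnCond p q γ) :=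
  decidable_of_iff (((Finset.univ.filter fun i => γ i = Sum.inr 0).card : ℤ) -
    ((Finset.univ.filter fun i => γ i = Sum.inr 1).card : ℤ) = (p : ℤ) - (q : ℤ)) Iff.rfl

noncomputable def cardT (s : ℕ) : ℕ := Nat.card {γ : Fin s → Fin s ⊕ Fin 2 // ArcCond γ}

lemma even_card_of_invol {α : Type*} [DecidableEq α] (f : α → α) (s : Finset α)
    (h1 : ∀ i ∈ s, f i ∈ s) (h2 : ∀ i ∈ s, f (f i) = i) (h3 : ∀ i ∈ s, f i ≠ i) :
    Even s.card := by
  classical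
  induction s using Finset.strongInduction with
  | _ s ih =>
    rcases s.eq_empty_or_nonempty with rfl | ⟨x, hx⟩
    · simp
    · have hfx := h1 x hx
      have hne := h3 x hx
      set t := s \ {x, f x} with ht
      have hsub : {x, f x} ⊆ s := by
        intro y hy; simp only [Finset.mem_insert, Finset.mem_singleton] at hy
        rcases hy with rfl | rfl; exacts [hx, hfx]
      have hts : t ⊂ s := Finset.sdiff_ssubset hsub (by simp)
      have h1' : ∀ i ∈ t, f i ∈ t := by
        intro i hi
        simp only [ht, Finset.mem_sdiff, Finset.mem_insert, Finset.mem_singleton, not_or] at hi ⊢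
        refine ⟨h1 i hi.1, ?_, ?_⟩
        · intro h
          exact hi.2.2 (by rw [← h2 i hi.1, h])
        · intro h
          exact hi.2.1 (by rw [← h2 i hi.1, h, h2 x hx])
      have heven := ih t hts h1'
        (fun i hi => h2 i (Finset.mem_sdiff.mp hi).1)
        (fun i hi => h3 i (Finset.mem_sdiff.mp hi).1)
      have hcard2 : ({x, f x} : Finset α).card = 2 := by
        rw [Finset.card_insert_of_notMem (by simpa using hne.symm), Finset.card_singleton]
      have : t.card = s.card - 2 := by rw [ht, Finset.card_sdiff_of_subset hsub, hcard2]
      have hle : 2 ≤ s.card := hcard2 ▸ Finset.card_le_card hsub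
      obtain ⟨m, hm⟩ := heven
      exact ⟨m + 1, by omega⟩

def pIdx {s : ℕ} (γ : Fin s → Fin s ⊕ Fin 2) : ℕ :=
  (univ.filter fun i => γ i = Sum.inr 0).card + (univ.filter fun i => (γ i).isLeft).card / 2

lemma tri {s : ℕ} (γ : Fin s → Fin s ⊕ Fin 2) :
    (univ.filter fun i => γ i = Sum.inr 0).card + (univ.filter fun i => γ i = Sum.inr 1).card
      + (univ.filter fun i => (γ i).isLeft).card = s := by
  classical
  rw [Finset.card_filter, Finset.card_filter, Finset.card_filter, ← Finset.sum_add_distrib,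
    ← Finset.sum_add_distrib]
  have key : ∀ i : Fin s, ((if γ i = Sum.inr 0 then 1 else 0) + (if γ i = Sum.inr 1 then 1 else 0))
      + (if (γ i).isLeft then 1 else 0) = 1 := by
    intro i
    cases h : γ i with
    | inl j => simp
    | inr c => fin_cases c <;> simp
  rw [Finset.sum_congr rfl (fun i _ => key i)]
  simp

lemma even_left {s : ℕ} (γ : Fin s → Fin s ⊕ Fin 2) (hγ : ArcCond γ) :
    Even (univ.filter fun i => (γ i).isLeft).card := by
  apply even_card_of_invol (fun i => Sum.elim id (fun _ => i) (γ i))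
  · intro i hi
    simp only [mem_filter, mem_univ, true_and] at hi ⊢
    cases h : γ i with
    | inl j => simp [h, (hγ i j h).2]
    | inr c => simp [h] at hi
  · intro i hi
    simp only [mem_filter, mem_univ, true_and] at hi
    cases h : γ i with
    | inl j => simp [h, (hγ i j h).2]
    | inr c => simp [h] at hi
  · intro i hi
    simp only [mem_filter, mem_univ, true_and] at hi
    cases h : γ i with
    | inl j => simpa [h] using fun hji => (hγ i j h).1 hji.symm
    | inr c => simp [h] at hi

lemma clan_eq (p q s : ℕ) (h : p + q = s) :
    cardClanPQ p q = (univ.filter fun γ : Fin s → Fin s ⊕ Fin 2 =>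
      ArcCond γ ∧ ((univ.filter fun i => γ i = Sum.inr 0).card : ℤ) -
        ((univ.filter fun i => γ i = Sum.inr 1).card : ℤ) = (p : ℤ) - (q : ℤ)).card := by
  subst h
  rw [cardClanPQ, Nat.card_eq_fintype_card, Fintype.card_subtype]
  congr 1
  apply Finset.filter_congr
  exact fun γ _ => Iff.rfl

lemma stepA (s : ℕ) :
    ∑ p ∈ Finset.range (s + 1), cardClanPQ p (s - p) = cardT s := by
  classical
  have hcT : cardT s = (univ.filter fun γ : Fin s → Fin s ⊕ Fin 2 => ArcCond γ).card := by
    rw [cardT, Nat.card_eq_fintype_card, Fintype.card_subtype]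
  have hmaps : ∀ γ ∈ (univ.filter fun γ : Fin s → Fin s ⊕ Fin 2 => ArcCond γ),
      pIdx γ ∈ Finset.range (s + 1) := by
    intro γ hγ
    have := tri γ
    simp only [Finset.mem_range, pIdx]
    omega
  rw [hcT, Finset.card_eq_sum_card_fiberwise hmaps]
  refine Finset.sum_congr rfl fun p hp => ?_
  rw [Finset.mem_range] at hp
  rw [clan_eq p (s - p) s (by omega), Finset.filter_filter]
  congr 1
  apply Finset.filter_congr
  intro γ _
  show _ ↔ _
  constructor
  · rintro ⟨hArc, hsgn⟩
    refine ⟨hArc, ?_⟩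
    obtain ⟨l, hl⟩ := even_left γ hArc
    have htri := tri γ
    rw [hl] at htri
    simp only [pIdx]
    rw [hl]
    omega
  · rintro ⟨hArc, hpI⟩
    refine ⟨hArc, ?_⟩
    obtain ⟨l, hl⟩ := even_left γ hArc
    have htri := tri γ
    rw [hl] at htri
    simp only [pIdx] at hpI
    rw [hl] at hpI
    omega

def enc2 : Fin 2 → Fin 4 := fun c => ⟨c.val, by omega⟩
def encCD : Fin 2 → Fin 4 := fun c => ⟨c.val + 2, by omega⟩
def dec42 : Fin 4 → Fin 2 := fun c => ⟨c.val % 2, Nat.mod_lt _ (by norm_num)⟩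

lemma enc2_inj : Function.Injective enc2 := by decide
lemma encCD_inj : Function.Injective encCD := by decide
lemma enc2_ne : ∀ c : Fin 2, enc2 c ≠ 2 ∧ enc2 c ≠ 3 := by decide
lemma encCD_eq : ∀ c : Fin 2, encCD c = 2 ∨ encCD c = 3 := by decide
lemma enc2_dec42 : ∀ c : Fin 4, c ≠ 2 → c ≠ 3 → enc2 (dec42 c) = c := by decide
lemma encCD_dec42 : ∀ c : Fin 4, c = 2 ∨ c = 3 → encCD (dec42 c) = c := by decide

def suppSet {n : ℕ} (γ : Fin n → Fin n ⊕ Fin 4) : Finset (Fin n) :=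
  univ.filter fun i => ¬(γ i = Sum.inr 2 ∨ γ i = Sum.inr 3)

lemma mem_suppSet {n : ℕ} (γ : Fin n → Fin n ⊕ Fin 4) (i : Fin n) :
    i ∈ suppSet γ ↔ ¬(γ i = Sum.inr 2 ∨ γ i = Sum.inr 3) := by
  simp [suppSet]

section relabel

variable {n s : ℕ} (S : Finset (Fin n)) (e : Fin s ≃ {x : Fin n // x ∈ S})

def fwd (γ' : Fin s → Fin s ⊕ Fin 2) (f : {x : Fin n // x ∉ S} → Fin 2) (i : Fin n) :
    Fin n ⊕ Fin 4 :=
  if h : i ∈ S then Sum.map (fun j => (e j : Fin n)) enc2 (γ' (e.symm ⟨i, h⟩))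
  else Sum.inr (encCD (f ⟨i, h⟩))

lemma fwd_apply_mem (γ' : Fin s → Fin s ⊕ Fin 2) (f : {x : Fin n // x ∉ S} → Fin 2) (j : Fin s) :
    fwd S e γ' f ↑(e j) = Sum.map (fun j => (↑(e j) : Fin n)) enc2 (γ' j) := by
  have h : (↑(e j) : Fin n) ∈ S := (e j).2
  rw [fwd, dif_pos h]
  rw [show (⟨↑(e j), h⟩ : {x : Fin n // x ∈ S}) = e j from Subtype.ext rfl,
    Equiv.symm_apply_apply]

lemma fwd_arc (γ' : Fin s → Fin s ⊕ Fin 2) (f : {x : Fin n // x ∉ S} → Fin 2)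
    (h : ArcCond γ') : ArcCond (fwd S e γ' f) := by
  intro i j hij
  by_cases hiS : i ∈ S
  · rw [fwd, dif_pos hiS] at hij
    cases hγ : γ' (e.symm ⟨i, hiS⟩) with
    | inr c => rw [hγ] at hij; simp at hij
    | inl j' =>
      rw [hγ] at hij
      simp only [Sum.map_inl] at hij
      injection hij with hj
      subst hj
      obtain ⟨hne, hback⟩ := h (e.symm ⟨i, hiS⟩) j' hγ
      constructor
      · intro hij2
        apply hne
        rw [show (⟨i, hiS⟩ : {x : Fin n // x ∈ S}) = e j' from Subtype.ext hij2,
          Equiv.symm_apply_apply]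
      · rw [fwd_apply_mem, hback]
        simp only [Sum.map_inl]
        rw [Equiv.apply_symm_apply]
  · rw [fwd, dif_neg hiS] at hij
    exact absurd hij (by simp)

lemma fwd_supp (γ' : Fin s → Fin s ⊕ Fin 2) (f : {x : Fin n // x ∉ S} → Fin 2) :
    suppSet (fwd S e γ' f) = S := by
  ext i
  rw [mem_suppSet]
  by_cases hiS : i ∈ S
  · rw [fwd, dif_pos hiS]
    simp only [hiS, iff_true]
    cases hγ : γ' (e.symm ⟨i, hiS⟩) with
    | inl j => simp [hγ]
    | inr c =>
      simp only [Sum.map_inr, not_or]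
      exact ⟨fun hc => (enc2_ne c).1 (Sum.inr.inj hc),
        fun hc => (enc2_ne c).2 (Sum.inr.inj hc)⟩
  · rw [fwd, dif_neg hiS]
    simp only [hiS, iff_false, not_not]
    rcases encCD_eq (f ⟨i, hiS⟩) with hc | hc
    · exact Or.inl (by rw [hc])
    · exact Or.inr (by rw [hc])

def bwd1 (γ : Fin n → Fin n ⊕ Fin 4) (j : Fin s) : Fin s ⊕ Fin 2 :=
  Sum.elim (fun k => if hk : k ∈ S then Sum.inl (e.symm ⟨k, hk⟩) else Sum.inr 0)
    (fun c => Sum.inr (dec42 c)) (γ ↑(e j))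

def bwd2 (γ : Fin n → Fin n ⊕ Fin 4) (x : {x : Fin n // x ∉ S}) : Fin 2 :=
  Sum.elim (fun _ => 0) dec42 (γ ↑x)

lemma mem_of_inl {γ : Fin n → Fin n ⊕ Fin 4} (hArc : ArcCond γ) (hsupp : suppSet γ = S)
    {i k : Fin n} (h : γ i = Sum.inl k) : k ∈ S := by
  rw [← hsupp, mem_suppSet, (hArc i k h).2]
  simp

lemma mem_iff_of_supp {γ : Fin n → Fin n ⊕ Fin 4} (hsupp : suppSet γ = S) (i : Fin n) :
    i ∈ S ↔ ¬(γ i = Sum.inr 2 ∨ γ i = Sum.inr 3) := by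
  rw [← hsupp, mem_suppSet]

lemma bwd1_arc {γ : Fin n → Fin n ⊕ Fin 4} (hArc : ArcCond γ) (hsupp : suppSet γ = S) :
    ArcCond (bwd1 S e γ) := by
  intro j j' hjj'
  cases hk : γ ↑(e j) with
  | inr c => simp [bwd1, hk] at hjj'
  | inl k =>
    have hkS : k ∈ S := mem_of_inl S hArc hsupp hk
    simp only [bwd1, hk, Sum.elim_inl, dif_pos hkS] at hjj'
    injection hjj' with hj'
    subst hj'
    constructor
    · intro hjj
      apply (hArc _ _ hk).1
      rw [hjj, Equiv.apply_symm_apply]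
    · have hgk : γ ↑(e (e.symm ⟨k, hkS⟩)) = Sum.inl ↑(e j) := by
        rw [Equiv.apply_symm_apply]; exact (hArc _ _ hk).2
      have hejS : (↑(e j) : Fin n) ∈ S := (e j).2
      simp only [bwd1, hgk, Sum.elim_inl, dif_pos hejS]
      rw [show (⟨↑(e j), hejS⟩ : {x : Fin n // x ∈ S}) = e j from Subtype.ext rfl,
        Equiv.symm_apply_apply]

lemma fwd_bwd {γ : Fin n → Fin n ⊕ Fin 4} (hArc : ArcCond γ) (hsupp : suppSet γ = S) :
    fwd S e (bwd1 S e γ) (bwd2 S γ) = γ := by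
  funext i
  by_cases hiS : i ∈ S
  · have hi24 := (mem_iff_of_supp S hsupp i).mp hiS
    rw [fwd, dif_pos hiS]
    have hei : (↑(e (e.symm ⟨i, hiS⟩)) : Fin n) = i := by rw [Equiv.apply_symm_apply]
    cases hγ : γ i with
    | inl k =>
      have hkS : k ∈ S := mem_of_inl S hArc hsupp hγ
      simp only [bwd1, hei, hγ, Sum.elim_inl, dif_pos hkS, Sum.map_inl]
      rw [Equiv.apply_symm_apply]
    | inr c =>
      simp only [bwd1, hei, hγ, Sum.elim_inr, Sum.map_inr]
      rw [enc2_dec42 c (fun h2 => hi24 (Or.inl (by rw [hγ, h2])))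
        (fun h3 => hi24 (Or.inr (by rw [hγ, h3])))]
  · rw [fwd, dif_neg hiS]
    have hi24 := (mem_iff_of_supp S hsupp i).not.mp hiS
    rw [not_not] at hi24
    rcases hi24 with h | h <;>
      simp only [bwd2, h, Sum.elim_inr] <;> rw [encCD_dec42] <;> simp [h]

end relabel

lemma relabel_card (n s : ℕ) (S : Finset (Fin n)) (hS : S.card = s) :
    (univ.filter fun γ : Fin n → Fin n ⊕ Fin 4 => ArcCond γ ∧ suppSet γ = S).card
      = 2 ^ (n - s) * cardT s := by
  classical
  have e : Fin s ≃ {x : Fin n // x ∈ S} :=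
    (Fintype.equivFinOfCardEq (by rw [Fintype.card_coe, hS])).symm
  have hF : Function.Bijective
      (fun x : {γ' : Fin s → Fin s ⊕ Fin 2 // ArcCond γ'} × ({x : Fin n // x ∉ S} → Fin 2) =>
        (⟨fwd S e x.1.1 x.2, fwd_arc S e x.1.1 x.2 x.1.2, fwd_supp S e x.1.1 x.2⟩ :
          {γ : Fin n → Fin n ⊕ Fin 4 // ArcCond γ ∧ suppSet γ = S})) := by
    constructor
    · rintro ⟨⟨γ1, h1⟩, f1⟩ ⟨⟨γ2, h2⟩, f2⟩ hEq
      rw [Subtype.mk.injEq] at hEq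
      refine Prod.ext (Subtype.ext ?_) ?_
      · funext j
        have hj := congrFun hEq ↑(e j)
        rw [fwd_apply_mem, fwd_apply_mem] at hj
        exact (Sum.map_injective.mpr
          ⟨fun a b hab => e.injective (Subtype.ext hab), enc2_inj⟩) hj
      · funext x
        have hx := congrFun hEq ↑x
        rw [fwd, fwd, dif_neg (by exact x.2), dif_neg (by exact x.2)] at hx
        have := encCD_inj (Sum.inr.inj hx)
        simpa using this
    · rintro ⟨γ, hArc, hsupp⟩
      exact ⟨⟨⟨bwd1 S e γ, bwd1_arc S e hArc hsupp⟩, bwd2 S γ⟩,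
        Subtype.ext (fwd_bwd S e hArc hsupp)⟩
  have hcards := Fintype.card_of_bijective hF
  rw [Fintype.card_prod, Fintype.card_subtype] at hcards
  have h2 : (univ.filter fun γ : Fin n → Fin n ⊕ Fin 4 => ArcCond γ ∧ suppSet γ = S).card
      = Fintype.card {γ : Fin n → Fin n ⊕ Fin 4 // ArcCond γ ∧ suppSet γ = S} :=
    (Fintype.card_subtype _).symm
  rw [h2, ← hcards]
  have h1 : Fintype.card ({x : Fin n // x ∉ S} → Fin 2) = 2 ^ (n - s) := by
    rw [Fintype.card_fun, Fintype.card_fin]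
    congr 1
    rw [Fintype.card_subtype_compl, Fintype.card_coe, Fintype.card_fin, hS]
  rw [h1, cardT, Nat.card_eq_fintype_card, Fintype.card_subtype, mul_comm]

lemma stepB (n : ℕ) : Nat.card {γ : Fin n → Fin n ⊕ Fin 4 // ArcCond γ}
    = ∑ m ∈ Finset.range (n + 1), n.choose m * (2 ^ (n - m) * cardT m) := by
  classical
  rw [Nat.card_eq_fintype_card, Fintype.card_subtype]
  rw [Finset.card_eq_sum_card_fiberwise
    (f := suppSet) (t := (univ : Finset (Finset (Fin n)))) (fun _ _ => mem_univ _)]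
  have hterm : ∀ S : Finset (Fin n),
      ((univ.filter fun γ : Fin n → Fin n ⊕ Fin 4 => ArcCond γ).filter
        fun γ => suppSet γ = S).card = 2 ^ (n - S.card) * cardT S.card := by
    intro S
    rw [Finset.filter_filter]
    exact relabel_card n S.card S rfl
  rw [Finset.sum_congr rfl (fun S _ => hterm S)]
  rw [← Finset.powerset_univ, Finset.sum_powerset, Finset.card_univ, Fintype.card_fin]
  refine Finset.sum_congr rfl fun m hm => ?_
  rw [Finset.sum_powersetCard m univ (fun j => 2 ^ (n - j) * cardT j), Finset.card_univ,
    Fintype.card_fin, smul_eq_mul]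

lemma reindex1 (m : ℕ) :
    (∑ p ∈ Finset.range (m + 1), ∑ q ∈ Finset.range (m - p + 1),
      m.choose (p + q) * cardClanPQ p q)
    = ∑ t ∈ Finset.range (m + 1), ∑ p ∈ Finset.range (t + 1),
      m.choose t * cardClanPQ p (t - p) := by
  rw [Finset.sum_sigma', Finset.sum_sigma']
  refine Finset.sum_nbij' (i := fun x : Σ _ : ℕ, ℕ => (⟨x.1 + x.2, x.1⟩ : Σ _ : ℕ, ℕ))
    (j := fun y : Σ _ : ℕ, ℕ => (⟨y.2, y.1 - y.2⟩ : Σ _ : ℕ, ℕ)) ?_ ?_ ?_ ?_ ?_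
  · rintro ⟨p, q⟩ h
    simp only [Finset.mem_sigma, Finset.mem_range] at h ⊢
    omega
  · rintro ⟨t, p⟩ h
    simp only [Finset.mem_sigma, Finset.mem_range] at h ⊢
    omega
  · rintro ⟨p, q⟩ h
    simp only [Finset.mem_sigma, Finset.mem_range] at h
    dsimp only
    exact Sigma.ext (by dsimp only; all_goals omega)
      (by dsimp only; all_goals simp only [heq_eq_eq]; all_goals omega)
  · rintro ⟨t, p⟩ h
    simp only [Finset.mem_sigma, Finset.mem_range] at h
    dsimp only
    exact Sigma.ext (by dsimp only; all_goals omega)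
      (by dsimp only; all_goals simp only [heq_eq_eq]; all_goals omega)
  · rintro ⟨p, q⟩ h
    simp only [Finset.mem_sigma, Finset.mem_range] at h
    simp only
    rw [Nat.add_sub_cancel_left]

lemma reindex2 (n : ℕ) (F : ℕ → ℕ → ℕ) :
    (∑ m ∈ Finset.range (n + 1), ∑ t ∈ Finset.range (m + 1), F m t)
    = ∑ t ∈ Finset.range (n + 1), ∑ k ∈ Finset.range (n - t + 1), F (t + k) t := by
  rw [Finset.sum_sigma', Finset.sum_sigma']
  refine Finset.sum_nbij' (i := fun x : Σ _ : ℕ, ℕ => (⟨x.2, x.1 - x.2⟩ : Σ _ : ℕ, ℕ))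
    (j := fun y : Σ _ : ℕ, ℕ => (⟨y.1 + y.2, y.1⟩ : Σ _ : ℕ, ℕ)) ?_ ?_ ?_ ?_ ?_
  · rintro ⟨m, t⟩ h
    simp only [Finset.mem_sigma, Finset.mem_range] at h ⊢
    omega
  · rintro ⟨t, k⟩ h
    simp only [Finset.mem_sigma, Finset.mem_range] at h ⊢
    omega
  · rintro ⟨m, t⟩ h
    simp only [Finset.mem_sigma, Finset.mem_range] at h
    dsimp only
    exact Sigma.ext (by dsimp only; all_goals omega)
      (by dsimp only; all_goals simp only [heq_eq_eq]; all_goals omega)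
  · rintro ⟨t, k⟩ h
    simp only [Finset.mem_sigma, Finset.mem_range] at h
    dsimp only
    exact Sigma.ext (by dsimp only; all_goals omega)
      (by dsimp only; all_goals simp only [heq_eq_eq]; all_goals omega)
  · rintro ⟨m, t⟩ h
    simp only [Finset.mem_sigma, Finset.mem_range] at h
    simp only
    congr 1
    omega

/-- `Γ(n)` is in bijection with the disjoint union, over `I ⊆ [n]` (with `m = |I|`),
over pairs `(p,q)` with `p + q ≤ m`, and over `J ⊆ [m]` with `|J| = p + q`, of the
sets `Γ(p,q)`; equivalently
`Σ_{I ⊆ [n]} Σ_{p+q ≤ |I|} C(|I|, p+q) · #Γ(p,q) = #Γ(n)`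
(decorations `+,-,c,d` of decorated `n`-clans are encoded by `Fin 4`). -/
theorem stmt14 (n : ℕ) :
    (∑ I ∈ (Finset.univ : Finset (Fin n)).powerset,
      ∑ p ∈ Finset.range (I.card + 1), ∑ q ∈ Finset.range (I.card - p + 1),
        (I.card).choose (p + q) * cardClanPQ p q) =
    Nat.card {γ : Fin n → Fin n ⊕ Fin 4 // ArcCond γ} := by
  classical
  have hinner : ∀ m : ℕ, (∑ p ∈ Finset.range (m + 1), ∑ q ∈ Finset.range (m - p + 1),
      m.choose (p + q) * cardClanPQ p q) = ∑ t ∈ Finset.range (m + 1),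
        m.choose t * cardT t := by
    intro m
    rw [reindex1]
    refine Finset.sum_congr rfl fun t ht => ?_
    rw [← Finset.mul_sum, stepA t]
  calc (∑ I ∈ (Finset.univ : Finset (Fin n)).powerset,
      ∑ p ∈ Finset.range (I.card + 1), ∑ q ∈ Finset.range (I.card - p + 1),
        (I.card).choose (p + q) * cardClanPQ p q)
      = ∑ I ∈ (Finset.univ : Finset (Fin n)).powerset,
          ∑ t ∈ Finset.range (I.card + 1), (I.card).choose t * cardT t :=
        Finset.sum_congr rfl fun I _ => hinner I.card
    _ = ∑ m ∈ Finset.range (n + 1),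
          n.choose m * ∑ t ∈ Finset.range (m + 1), m.choose t * cardT t := by
        rw [Finset.sum_powerset, Finset.card_univ, Fintype.card_fin]
        refine Finset.sum_congr rfl fun m hm => ?_
        rw [Finset.sum_powersetCard m univ
          (fun j => ∑ t ∈ Finset.range (j + 1), j.choose t * cardT t), Finset.card_univ,
          Fintype.card_fin, smul_eq_mul]
    _ = ∑ m ∈ Finset.range (n + 1), ∑ t ∈ Finset.range (m + 1),
          n.choose m * (m.choose t * cardT t) := by
        refine Finset.sum_congr rfl fun m _ => ?_
        rw [Finset.mul_sum]
    _ = ∑ t ∈ Finset.range (n + 1), ∑ k ∈ Finset.range (n - t + 1),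
          n.choose (t + k) * ((t + k).choose t * cardT t) :=
        reindex2 n (fun m t => n.choose m * (m.choose t * cardT t))
    _ = ∑ t ∈ Finset.range (n + 1), n.choose t * (2 ^ (n - t) * cardT t) := by
        refine Finset.sum_congr rfl fun t ht => ?_
        rw [Finset.mem_range] at ht
        have hstep : ∀ k ∈ Finset.range (n - t + 1),
            n.choose (t + k) * ((t + k).choose t * cardT t)
              = n.choose t * ((n - t).choose k * cardT t) := by
          intro k hk
          rw [Finset.mem_range] at hk
          rw [← mul_assoc, ← mul_assoc, Nat.choose_mul (n := n) (k := t + k) (s := t) (by omega),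
            Nat.add_sub_cancel_left]
        rw [Finset.sum_congr rfl hstep, ← Finset.mul_sum, ← Finset.sum_mul,
          Nat.sum_range_choose]
    _ = Nat.card {γ : Fin n → Fin n ⊕ Fin 4 // ArcCond γ} := (stepB n).symm
end

section
/- Let G be a group, Q ⊆ P ⊆ G subgroups, B ⊆ G a subgroup, and S ⊆ G a complete set of representatives of the double cosets B\G/P. Then there is a bijection from the disjoint union over s ∈ S of the double coset spaces (P ∩ s⁻¹Bs)\P/Q to B\G/Q, sending the class of x ∈ P in the s-component to the double coset B s x Q. -/
/-- The double coset relation `x ~ y ⟺ y = b x q` for `b ∈ B`, `q ∈ Q`;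
`Quot` of this relation is the double coset space `B\G/Q`. -/
def DCRel {G : Type*} [Group G] (B Q : Subgroup G) (x y : G) : Prop :=
  ∃ b ∈ B, ∃ q ∈ Q, y = b * x * q

/-- For `s ∈ G`, the relation on `P` whose quotient is `(P ∩ s⁻¹Bs)\P/Q`. -/
def SmallRel {G : Type*} [Group G] (B P Q : Subgroup G) (s : G) (x y : P) : Prop :=
  ∃ a : G, (a ∈ P ∧ ∃ b ∈ B, a = s⁻¹ * b * s) ∧ ∃ q ∈ Q, (y : G) = a * (x : G) * q

theorem DCRel.equivalence {G : Type*} [Group G] (B Q : Subgroup G) :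
    Equivalence (DCRel B Q) := by
  constructor
  · intro x; exact ⟨1, one_mem _, 1, one_mem _, by group⟩
  · rintro x y ⟨b, hb, q, hq, rfl⟩
    exact ⟨b⁻¹, inv_mem hb, q⁻¹, inv_mem hq, by group⟩
  · rintro x y z ⟨b, hb, q, hq, rfl⟩ ⟨b', hb', q', hq', rfl⟩
    exact ⟨b' * b, mul_mem hb' hb, q * q', mul_mem hq hq', by group⟩

/-- Let `G` be a group, `Q ⊆ P ⊆ G` and `B ⊆ G` subgroups, and `S` a complete set of
representatives of `B\G/P` (every `g ∈ G` lies in `B s P` for exactly one `s ∈ S`).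
Then there is a bijection from the disjoint union over `s ∈ S` of the double coset
spaces `(P ∩ s⁻¹Bs)\P/Q` to `B\G/Q` sending the class of `x ∈ P` in the
`s`-component to the double coset `B (s x) Q`. -/
theorem stmt18 {G : Type*} [Group G] (B P Q : Subgroup G) (hQP : Q ≤ P) (S : Set G)
    (hS : ∀ g : G, ∃! s, s ∈ S ∧ ∃ b ∈ B, ∃ p ∈ P, g = b * s * p) :
    ∃ f : (Σ s : S, Quot (SmallRel B P Q (s : G))) → Quot (DCRel B Q),
      Function.Bijective f ∧
      ∀ (s : S) (x : P),
        f ⟨s, Quot.mk (SmallRel B P Q (s : G)) x⟩ =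
          Quot.mk (DCRel B Q) ((s : G) * (x : G)) := by
  refine ⟨fun p => Quot.lift (fun x : P => Quot.mk (DCRel B Q) ((p.1 : G) * x))
    (fun x y hxy => ?_) p.2, ⟨?_, ?_⟩, fun s x => rfl⟩
  · obtain ⟨a, ⟨haP, b, hb, rfl⟩, q, hq, hyx⟩ := hxy
    apply Quot.sound
    exact ⟨b, hb, q, hq, by rw [hyx]; group⟩
  · rintro ⟨s, u⟩ ⟨t, v⟩ h
    induction u using Quot.ind with | _ x => ?_
    induction v using Quot.ind with | _ y => ?_
    simp only at h
    rw [Quot.eq, (DCRel.equivalence B Q).eqvGen_iff] at h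
    obtain ⟨b, hb, q, hq, heq⟩ := h
    -- heq : t * y = b * (s * x) * q
    have hst : (s : G) = (t : G) := by
      obtain ⟨w, _, huniq⟩ := hS (t : G)
      have h1 : (t : G) = w := huniq (t : G) ⟨t.2, 1, one_mem _, 1, one_mem _, by group⟩
      have h2 : (s : G) = w := huniq (s : G)
        ⟨s.2, b, hb, x * q * (y : G)⁻¹,
          mul_mem (mul_mem x.2 (hQP hq)) (inv_mem y.2), by
            rw [eq_mul_inv_of_mul_eq heq]; group⟩
      rw [h2, ← h1]
    obtain ⟨s, hs⟩ := s
    obtain ⟨t, ht⟩ := t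
    simp only at hst
    subst hst
    congr 1
    apply Quot.sound
    refine ⟨s⁻¹ * b * s, ⟨?_, b, hb, rfl⟩, q, hq, ?_⟩
    · have h : s * (y : G) = b * (s * (x : G)) * q := heq
      have : s⁻¹ * b * s = (y : G) * q⁻¹ * (x : G)⁻¹ := by
        calc s⁻¹ * b * s = s⁻¹ * (b * (s * (x:G)) * q) * q⁻¹ * (x:G)⁻¹ := by group
        _ = s⁻¹ * (s * (y:G)) * q⁻¹ * (x:G)⁻¹ := by rw [h]
        _ = (y:G) * q⁻¹ * (x:G)⁻¹ := by group
      rw [this]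
      exact mul_mem (mul_mem y.2 (inv_mem (hQP hq))) (inv_mem x.2)
    · rw [show s⁻¹ * b * s * x * q = s⁻¹ * (b * (s * x) * q) by group, ← heq]
      group
  · intro u
    induction u using Quot.ind with | _ g => ?_
    obtain ⟨s, ⟨hsS, b, hb, p, hp, hg⟩, _⟩ := hS g
    refine ⟨⟨⟨s, hsS⟩, Quot.mk _ ⟨p, hp⟩⟩, ?_⟩
    apply Quot.sound
    exact ⟨b, hb, 1, one_mem _, by rw [hg]; group⟩
end
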